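/- arXiv:2306.06957 — 8 statements merged into one kernel-verified Lean document; each statement's English description precedes it below -/
import Mathlib

section
/- Let n ≥ 1 be an integer and R = R(n). Then: (1) R has nilpotency class exactly 2; (2) the exponent of R equals 2^{n+1}; (3) the center of R equals the commutator subgroup of R, and this subgroup is cyclic of order 2^n; (4) the quotient of R by its commutator subgroup is isomorphic to the direct product of two cyclic groups of order 2^n. -/
/-- The relators of the presented group `R(n)`: generators `a = of 0`, `b = of 1`,
relators `a^(2^(n+1))`, `b^(2^(n+1))`, `a^(2^n) ([a,b]^(2^(n-1)))⁻¹`,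
`b^(2^n) ([a,b]^(2^(n-1)))⁻¹`, `[a,[a,b]]`, `[b,[a,b]]`, where `[x,y] = x⁻¹y⁻¹xy`. -/
def Rrels (n : ℕ) : Set (FreeGroup (Fin 2)) :=
  let a : FreeGroup (Fin 2) := FreeGroup.of 0
  let b : FreeGroup (Fin 2) := FreeGroup.of 1
  let c : FreeGroup (Fin 2) := a⁻¹ * b⁻¹ * a * b
  {a ^ 2 ^ (n + 1), b ^ 2 ^ (n + 1), a ^ 2 ^ n * (c ^ 2 ^ (n - 1))⁻¹,
    b ^ 2 ^ n * (c ^ 2 ^ (n - 1))⁻¹, a⁻¹ * c⁻¹ * a * c, b⁻¹ * c⁻¹ * b * c}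

/-- The group `R(n)`. -/
def Rgrp (n : ℕ) : Type := PresentedGroup (Rrels n)

noncomputable instance (n : ℕ) : Group (Rgrp n) :=
  inferInstanceAs (Group (PresentedGroup (Rrels n)))

/-!
The relations say that `c = a⁻¹ b⁻¹ a b` commutes with `a` and `b`, so
`(x, y, z) ↦ b^y a^x c^z` is a surjective homomorphism from the integer Heisenberg group onto
`R(n)`. Commutators, powers and central elements of `R(n)` are therefore images of explicit
Heisenberg elements, and everything reduces to knowing the order of `c`. The relations give
`c^(2^n) = a^(2^(n+1)) = 1`; that `c^(2^(n-1)) ≠ 1` is seen in a quotient of the Heisenberg group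
in which the relations hold.
-/

open scoped commutatorElement

theorem Subgroup.upperCentralSeries_two_eq_top_iff {G : Type*} [Group G] :
    upperCentralSeries G 2 = ⊤ ↔ _root_.commutator G ≤ center G := by
  rw [eq_top_iff, _root_.commutator_def, commutator_le]
  simp [SetLike.le_def, mem_upperCentralSeries_succ_iff]

theorem zpow_mem_of_pow_mem {G : Type*} [Group G] {H : Subgroup G} {g : G} {m : ℕ}
    (hg : g ^ m ∈ H) {k : ℤ} (hk : (m : ℤ) ∣ k) : g ^ k ∈ H := by
  obtain ⟨l, rfl⟩ := hk
  rw [zpow_mul, zpow_natCast]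
  exact H.zpow_mem hg l

theorem zpow_mul_zpow_swap {G : Type*} [Group G] {a b c : G} (hac : Commute a c)
    (hbc : Commute b c) (hab : a * b = b * a * c) (i j : ℤ) :
    a ^ i * b ^ j = b ^ j * a ^ i * c ^ (i * j) := by
  have hconj : ∀ i : ℤ, b⁻¹ * a ^ i * b = a ^ i * c ^ i := fun i => by
    calc b⁻¹ * a ^ i * b = (b⁻¹ * a * b) ^ i := by
          simpa using (conj_zpow (a := b⁻¹) (b := a)).symm
      _ = (a * c) ^ i := by rw [mul_assoc, hab]; group
      _ = a ^ i * c ^ i := hac.mul_zpow i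
  have hconj' : a ^ i * b * a ^ (-i) = b * c ^ i := by
    calc a ^ i * b * a ^ (-i) = b * (b⁻¹ * a ^ i * b) * a ^ (-i) := by group
      _ = b * c ^ i := by rw [hconj, (hac.zpow_zpow i i).eq]; group
  calc a ^ i * b ^ j = (a ^ i * b * (a ^ i)⁻¹) ^ j * a ^ i := by rw [conj_zpow]; group
    _ = (a ^ i * b * a ^ (-i)) ^ j * a ^ i := by rw [zpow_neg]
    _ = b ^ j * a ^ i * c ^ (i * j) := by
        rw [hconj', (hbc.zpow_right i).mul_zpow, ← zpow_mul, mul_assoc, mul_assoc,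
          ((hac.zpow_zpow i (i * j)).symm).eq]

@[ext] structure Heisenberg (R : Type*) where
  x : R
  y : R
  z : R

namespace Heisenberg
variable {R : Type*} [CommRing R]

instance : Mul (Heisenberg R) := ⟨fun u v => ⟨u.x + v.x, u.y + v.y, u.z + v.z + u.x * v.y⟩⟩
instance : One (Heisenberg R) := ⟨⟨0, 0, 0⟩⟩
instance : Inv (Heisenberg R) := ⟨fun u => ⟨-u.x, -u.y, -u.z + u.x * u.y⟩⟩

@[simp] lemma mul_x (u v : Heisenberg R) : (u * v).x = u.x + v.x := rfl
@[simp] lemma mul_y (u v : Heisenberg R) : (u * v).y = u.y + v.y := rfl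
@[simp] lemma mul_z (u v : Heisenberg R) : (u * v).z = u.z + v.z + u.x * v.y := rfl
@[simp] lemma one_x : (1 : Heisenberg R).x = 0 := rfl
@[simp] lemma one_y : (1 : Heisenberg R).y = 0 := rfl
@[simp] lemma one_z : (1 : Heisenberg R).z = 0 := rfl
@[simp] lemma inv_x (u : Heisenberg R) : u⁻¹.x = -u.x := rfl
@[simp] lemma inv_y (u : Heisenberg R) : u⁻¹.y = -u.y := rfl
@[simp] lemma inv_z (u : Heisenberg R) : u⁻¹.z = -u.z + u.x * u.y := rfl

instance : Group (Heisenberg R) where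
  mul_assoc u v w := by ext <;> simp <;> ring
  one_mul u := by ext <;> simp
  mul_one u := by ext <;> simp
  inv_mul_cancel u := by ext <;> simp

theorem pow_eq (u : Heisenberg R) (m : ℕ) :
    u ^ m = ⟨m * u.x, m * u.y, m * u.z + m.choose 2 * (u.x * u.y)⟩ := by
  induction m with
  | zero => ext <;> simp
  | succ m ih =>
    rw [pow_succ, ih]
    ext <;> simp [Nat.choose_succ_succ] <;> ring

theorem commutatorElement_eq (u v : Heisenberg R) :
    ⁅u, v⁆ = ⟨0, 0, u.x * v.y - v.x * u.y⟩ := by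
  ext <;> simp [commutatorElement_def]; ring

section lift
variable {G : Type*} [Group G] {a b c : G}

def lift (hac : Commute a c) (hbc : Commute b c) (hab : a * b = b * a * c) :
    Heisenberg ℤ →* G where
  toFun u := b ^ u.y * a ^ u.x * c ^ u.z
  map_one' := by simp
  map_mul' u v := by
    have hca (k l : ℤ) : Commute (c ^ k) (a ^ l) := (hac.zpow_zpow l k).symm
    have hcb (k l : ℤ) : Commute (c ^ k) (b ^ l) := (hbc.zpow_zpow l k).symm
    show b ^ (u.y + v.y) * a ^ (u.x + v.x) * c ^ (u.z + v.z + u.x * v.y) = _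
    simp only [mul_assoc]
    rw [(hcb u.z v.y).left_comm, (hca u.z v.x).left_comm, ← mul_assoc (a ^ u.x),
      zpow_mul_zpow_swap hac hbc hab]
    simp only [mul_assoc]
    rw [(hca (u.x * v.y) v.x).left_comm, zpow_add b, zpow_add a,
      show u.z + v.z + u.x * v.y = u.x * v.y + (u.z + v.z) by ring, zpow_add c, zpow_add c]
    simp only [mul_assoc]

@[simp] theorem lift_apply (hac : Commute a c) (hbc : Commute b c)
    (hab : a * b = b * a * c) (u : Heisenberg ℤ) :
    lift hac hbc hab u = b ^ u.y * a ^ u.x * c ^ u.z := rfl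

variable (hac : Commute a c) (hbc : Commute b c) (hab : a * b = b * a * c)

theorem lift_surjective (hgen : Subgroup.closure {a, b} = ⊤) :
    Function.Surjective (lift hac hbc hab) := by
  rw [← MonoidHom.range_eq_top, eq_top_iff, ← hgen, Subgroup.closure_le]
  rintro g (rfl | rfl)
  · exact ⟨⟨1, 0, 0⟩, by simp⟩
  · exact ⟨⟨0, 1, 0⟩, by simp⟩

theorem commutator_le_zpowers (hs : Function.Surjective (lift hac hbc hab)) :
    commutator G ≤ Subgroup.zpowers c := by
  rw [_root_.commutator_def, Subgroup.commutator_le]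
  intro g _ h _
  obtain ⟨u, rfl⟩ := hs g
  obtain ⟨v, rfl⟩ := hs h
  rw [← map_commutatorElement, commutatorElement_eq]
  exact ⟨u.x * v.y - v.x * u.y, by simp⟩

theorem zpow_eq_one_of_lift_mem_center {u : Heisenberg ℤ}
    (hu : lift hac hbc hab u ∈ Subgroup.center G) : c ^ u.x = 1 ∧ c ^ u.y = 1 := by
  set φ := lift hac hbc hab
  have hb : φ (u * ⟨0, 1, 0⟩) = φ (⟨0, 1, 0⟩ * u) * c ^ u.x := by
    rw [show u * ⟨0, 1, 0⟩ = ⟨0, 1, 0⟩ * u * ⟨0, 0, u.x⟩ by ext <;> simp; ring, map_mul]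
    simp [φ]
  have ha : φ (⟨1, 0, 0⟩ * u) = φ (u * ⟨1, 0, 0⟩) * c ^ u.y := by
    rw [show ⟨1, 0, 0⟩ * u = u * ⟨1, 0, 0⟩ * ⟨0, 0, u.y⟩ by ext <;> simp; ring, map_mul]
    simp [φ]
  rw [map_mul, map_mul, (Subgroup.mem_center_iff.1 hu (φ ⟨0, 1, 0⟩)).symm, left_eq_mul] at hb
  rw [map_mul, map_mul, (Subgroup.mem_center_iff.1 hu (φ ⟨1, 0, 0⟩)), left_eq_mul] at ha
  exact ⟨hb, ha⟩

end lift

/-- For `d = 2 ^ (n - 1)` this is the normal subgroup generated by `(2d, 0, d)` and `(0, 2d, d)`: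
modulo it, `(1, 0, 0)` and `(0, 1, 0)` satisfy the relations of `R(n)`, while their commutator
`(0, 0, 1)` keeps order `2 ^ n`. -/
def relSubgroup (d : ℤ) : Subgroup (Heisenberg ℤ) where
  carrier := {u | ∃ s t m : ℤ, u = ⟨2 * d * s, 2 * d * t, d * (s + t) + 2 * d * m⟩}
  one_mem' := ⟨0, 0, 0, by ext <;> simp⟩
  mul_mem' := by
    rintro _ _ ⟨s, t, m, rfl⟩ ⟨s', t', m', rfl⟩
    exact ⟨s + s', t + t', m + m' + 2 * d * s * t', by ext <;> simp <;> ring⟩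
  inv_mem' := by
    rintro _ ⟨s, t, m, rfl⟩
    exact ⟨-s, -t, -m + 2 * d * s * t, by ext <;> simp; ring⟩

instance (d : ℤ) : (relSubgroup d).Normal where
  conj_mem := by
    rintro _ ⟨s, t, m, rfl⟩ g
    exact ⟨s, t, m + g.x * t - s * g.y, by ext <;> simp; ring⟩

theorem mk_zero_zero_notMem_relSubgroup {d : ℤ} (hd : d ≠ 0) :
    (⟨0, 0, d⟩ : Heisenberg ℤ) ∉ relSubgroup d := by
  rintro ⟨s, t, m, h⟩
  simp only [Heisenberg.mk.injEq] at h
  obtain ⟨hs, ht, hz⟩ := h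
  have hs : s = 0 := by simpa [hd] using hs.symm
  have ht : t = 0 := by simpa [hd] using ht.symm
  have : d * (2 * m - 1) = 0 := by subst hs ht; linear_combination -hz
  rcases mul_eq_zero.1 this with h | h
  · exact hd h
  · omega

end Heisenberg

namespace Rgrp

noncomputable def a (n : ℕ) : Rgrp n := PresentedGroup.of 0
noncomputable def b (n : ℕ) : Rgrp n := PresentedGroup.of 1
noncomputable def c (n : ℕ) : Rgrp n := (a n)⁻¹ * (b n)⁻¹ * a n * b n

variable {n : ℕ}

theorem relators_eq_one :
    a n ^ 2 ^ (n + 1) = 1 ∧ b n ^ 2 ^ (n + 1) = 1 ∧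
    a n ^ 2 ^ n * (c n ^ 2 ^ (n - 1))⁻¹ = 1 ∧ b n ^ 2 ^ n * (c n ^ 2 ^ (n - 1))⁻¹ = 1 ∧
    (a n)⁻¹ * (c n)⁻¹ * a n * c n = 1 ∧ (b n)⁻¹ * (c n)⁻¹ * b n * c n = 1 := by
  have h : ∀ r ∈ Rrels n, PresentedGroup.mk (Rrels n) r = 1 :=
    fun _ ↦ PresentedGroup.one_of_mem
  simp only [Rrels, Set.mem_insert_iff, Set.mem_singleton_iff, forall_eq_or_imp, forall_eq] at h
  exact h

theorem a_pow_two_pow_succ : a n ^ 2 ^ (n + 1) = 1 := relators_eq_one.1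

theorem b_pow_two_pow_succ : b n ^ 2 ^ (n + 1) = 1 := relators_eq_one.2.1

theorem a_pow_two_pow : a n ^ 2 ^ n = c n ^ 2 ^ (n - 1) :=
  mul_inv_eq_one.1 relators_eq_one.2.2.1

theorem b_pow_two_pow : b n ^ 2 ^ n = c n ^ 2 ^ (n - 1) :=
  mul_inv_eq_one.1 relators_eq_one.2.2.2.1

theorem commute_a_c : Commute (a n) (c n) :=
  Commute.inv_inv_iff.1 <| commutatorElement_eq_one_iff_commute.1 <| by
    simpa [commutatorElement_def] using relators_eq_one.2.2.2.2.1

theorem commute_b_c : Commute (b n) (c n) :=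
  Commute.inv_inv_iff.1 <| commutatorElement_eq_one_iff_commute.1 <| by
    simpa [commutatorElement_def] using relators_eq_one.2.2.2.2.2

theorem a_mul_b : a n * b n = b n * a n * c n := by
  rw [c]; group

theorem closure_a_b : Subgroup.closure {a n, b n} = ⊤ := by
  refine eq_top_iff.2 fun g _ ↦ PresentedGroup.generated_by _ _ (fun j ↦ ?_) g
  fin_cases j
  · exact Subgroup.subset_closure (Set.mem_insert _ _)
  · exact Subgroup.subset_closure (Set.mem_insert_of_mem _ rfl)

variable (n) in
noncomputable def heisenbergHom : Heisenberg ℤ →* Rgrp n :=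
  Heisenberg.lift commute_a_c commute_b_c a_mul_b

theorem heisenbergHom_surjective : Function.Surjective (heisenbergHom n) :=
  Heisenberg.lift_surjective _ _ _ closure_a_b

theorem c_pow_two_pow (hn : 1 ≤ n) : c n ^ 2 ^ n = 1 := by
  obtain ⟨p, rfl⟩ : ∃ p, n = p + 1 := ⟨n - 1, by omega⟩
  have h : a (p + 1) ^ 2 ^ (p + 1) = c (p + 1) ^ 2 ^ p := a_pow_two_pow
  rw [pow_succ, pow_mul, ← h, ← pow_mul, ← pow_succ, a_pow_two_pow_succ]

theorem lift_mem_relSubgroup (p : ℕ) :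
    ∀ r ∈ Rrels (p + 1),
      FreeGroup.lift ![(⟨1, 0, 0⟩ : Heisenberg ℤ), ⟨0, 1, 0⟩] r ∈
        Heisenberg.relSubgroup (2 ^ p) := by
  simp only [Rrels, Set.mem_insert_iff, Set.mem_singleton_iff, forall_eq_or_imp, forall_eq,
    map_mul, map_inv, map_pow, FreeGroup.lift_apply_of, Nat.add_sub_cancel]
  refine ⟨⟨2, 0, -1, ?_⟩, ⟨0, 2, -1, ?_⟩, ⟨1, 0, -1, ?_⟩, ⟨0, 1, -1, ?_⟩,
    ⟨0, 0, 0, ?_⟩, ⟨0, 0, 0, ?_⟩⟩ <;> ext <;> simp [Heisenberg.pow_eq] <;> ring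

theorem c_pow_two_pow_pred_ne_one (hn : 1 ≤ n) : c n ^ 2 ^ (n - 1) ≠ 1 := by
  obtain ⟨p, rfl⟩ : ∃ p, n = p + 1 := ⟨n - 1, by omega⟩
  let φ : Rgrp (p + 1) →* Heisenberg ℤ ⧸ Heisenberg.relSubgroup (2 ^ p) :=
    QuotientGroup.map _ _ _ (Subgroup.normalClosure_le_normal (lift_mem_relSubgroup p))
  have hc : φ (c (p + 1)) = ((⟨0, 0, 1⟩ : Heisenberg ℤ) : Heisenberg ℤ ⧸ _) := by
    have ha : φ (a (p + 1)) = ((⟨1, 0, 0⟩ : Heisenberg ℤ) : Heisenberg ℤ ⧸ _) :=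
      QuotientGroup.map_mk _ _ _ _ _
    have hb : φ (b (p + 1)) = ((⟨0, 1, 0⟩ : Heisenberg ℤ) : Heisenberg ℤ ⧸ _) :=
      QuotientGroup.map_mk _ _ _ _ _
    simp only [c, map_mul, map_inv, ha, hb, ← QuotientGroup.mk_inv, ← QuotientGroup.mk_mul]
    congr 1
  intro h
  have := congrArg φ h
  rw [map_pow, hc, map_one, ← QuotientGroup.mk_pow, Heisenberg.pow_eq,
    QuotientGroup.eq_one_iff] at this
  exact Heisenberg.mk_zero_zero_notMem_relSubgroup (pow_ne_zero p two_ne_zero)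
    (by simpa using this)

theorem orderOf_c (hn : 1 ≤ n) : orderOf (c n) = 2 ^ n := by
  obtain ⟨p, rfl⟩ : ∃ p, n = p + 1 := ⟨n - 1, by omega⟩
  exact orderOf_eq_prime_pow (c_pow_two_pow_pred_ne_one hn) (c_pow_two_pow hn)

theorem orderOf_a (hn : 1 ≤ n) : orderOf (a n) = 2 ^ (n + 1) :=
  orderOf_eq_prime_pow (a_pow_two_pow ▸ c_pow_two_pow_pred_ne_one hn) a_pow_two_pow_succ

theorem c_zpow_eq_one_iff (hn : 1 ≤ n) {k : ℤ} : c n ^ k = 1 ↔ 2 ^ n ∣ k := by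
  rw [← orderOf_dvd_iff_zpow_eq_one, orderOf_c hn]
  norm_cast

theorem commutator_eq_zpowers_c : commutator (Rgrp n) = Subgroup.zpowers (c n) := by
  refine le_antisymm (Heisenberg.commutator_le_zpowers _ _ _ heisenbergHom_surjective) ?_
  have hc : c n = ⁅(a n)⁻¹, (b n)⁻¹⁆ := by simp [c, commutatorElement_def]
  rw [Subgroup.zpowers_le, hc]
  exact Subgroup.commutator_mem_commutator (Subgroup.mem_top _) (Subgroup.mem_top _)

theorem heisenbergHom_mem_zpowers_c {u : Heisenberg ℤ} (hx : 2 ^ n ∣ u.x) (hy : 2 ^ n ∣ u.y) :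
    heisenbergHom n u ∈ Subgroup.zpowers (c n) := by
  refine Subgroup.mul_mem _ (Subgroup.mul_mem _ ?_ ?_) (Subgroup.zpow_mem_zpowers _ _)
  · exact zpow_mem_of_pow_mem (b_pow_two_pow.symm ▸ Subgroup.npow_mem_zpowers _ _)
      (by exact_mod_cast hy)
  · exact zpow_mem_of_pow_mem (a_pow_two_pow.symm ▸ Subgroup.npow_mem_zpowers _ _)
      (by exact_mod_cast hx)

theorem center_eq_zpowers_c (hn : 1 ≤ n) : Subgroup.center (Rgrp n) = Subgroup.zpowers (c n) := by
  refine le_antisymm (fun g hg ↦ ?_) (Subgroup.zpowers_le.2 ?_)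
  · obtain ⟨u, rfl⟩ := heisenbergHom_surjective g
    obtain ⟨hx, hy⟩ := Heisenberg.zpow_eq_one_of_lift_mem_center _ _ _ hg
    exact heisenbergHom_mem_zpowers_c ((c_zpow_eq_one_iff hn).1 hx) ((c_zpow_eq_one_iff hn).1 hy)
  · refine Subgroup.mem_center_iff.2 fun g ↦ ?_
    obtain ⟨u, rfl⟩ := heisenbergHom_surjective g
    have hc : c n = heisenbergHom n ⟨0, 0, 1⟩ := by simp [heisenbergHom]
    rw [hc, ← map_mul, ← map_mul]
    congr 1
    ext <;> simp [add_comm]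

theorem center_ne_top (hn : 1 ≤ n) : Subgroup.center (Rgrp n) ≠ ⊤ := by
  intro h
  have hab : a n * b n = b n * a n := Subgroup.mem_center_iff.1 (h ▸ Subgroup.mem_top _) (a n)
  have hc : c n = 1 := by
    rw [c, mul_assoc _ (a n), hab]
    group
  have := orderOf_c hn
  rw [hc, orderOf_one] at this
  exact (Nat.one_lt_two_pow (by omega)).ne this

theorem pow_two_pow_succ_eq_one (hn : 1 ≤ n) (g : Rgrp n) : g ^ 2 ^ (n + 1) = 1 := by
  obtain ⟨u, rfl⟩ := heisenbergHom_surjective g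
  have hchoose : 2 ^ n ∣ (2 ^ (n + 1)).choose 2 := by
    rw [Nat.choose_two_right]
    exact Nat.dvd_div_of_mul_dvd ⟨2 ^ (n + 1) - 1, by ring⟩
  rw [← map_pow, Heisenberg.pow_eq]
  simp only [heisenbergHom, Heisenberg.lift_apply, zpow_mul, zpow_natCast, a_pow_two_pow_succ,
    b_pow_two_pow_succ, one_zpow, one_mul, c_zpow_eq_one_iff hn]
  have h2 : (2 : ℤ) ^ n ∣ ((2 ^ (n + 1) : ℕ) : ℤ) := by
    exact_mod_cast pow_dvd_pow 2 n.le_succ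
  exact (h2.mul_right _).add ((Int.natCast_dvd_natCast.2 hchoose).mul_right _)

theorem exponent_eq (hn : 1 ≤ n) : Monoid.exponent (Rgrp n) = 2 ^ (n + 1) :=
  Nat.dvd_antisymm (Monoid.exponent_dvd_of_forall_pow_eq_one (pow_two_pow_succ_eq_one hn))
    (orderOf_a hn ▸ Monoid.order_dvd_exponent (a n))

theorem zmodProd_rels_eq_one :
    ∀ r ∈ Rrels n,
      FreeGroup.lift ![Multiplicative.ofAdd ((1, 0) : ZMod (2 ^ n) × ZMod (2 ^ n)),
        Multiplicative.ofAdd (0, 1)] r = 1 := by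
  have h : ((2 ^ (n + 1) : ℕ) : ZMod (2 ^ n)) = 0 :=
    (ZMod.natCast_eq_zero_iff _ _).2 (pow_dvd_pow 2 n.le_succ)
  simp only [Rrels, Set.mem_insert_iff, Set.mem_singleton_iff, forall_eq_or_imp, forall_eq,
    map_mul, map_inv, map_pow, FreeGroup.lift_apply_of]
  refine ⟨?_, ?_, ?_, ?_, ?_, ?_⟩ <;>
    simp [← ofAdd_nsmul, ← ofAdd_add, ← ofAdd_neg, Prod.ext_iff, h]

variable (n) in
noncomputable def toZModProd : Rgrp n →* Multiplicative (ZMod (2 ^ n) × ZMod (2 ^ n)) :=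
  PresentedGroup.toGroup zmodProd_rels_eq_one

theorem toZModProd_heisenbergHom (u : Heisenberg ℤ) :
    toZModProd n (heisenbergHom n u) =
      Multiplicative.ofAdd ((u.x : ZMod (2 ^ n)), (u.y : ZMod (2 ^ n))) := by
  have ha : toZModProd n (a n) = Multiplicative.ofAdd (1, 0) := PresentedGroup.toGroup.of _
  have hb : toZModProd n (b n) = Multiplicative.ofAdd (0, 1) := PresentedGroup.toGroup.of _
  simp only [heisenbergHom, Heisenberg.lift_apply, c, map_mul, map_zpow, map_inv, ha, hb]
  simp [← ofAdd_zsmul, ← ofAdd_add, ← ofAdd_neg]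

theorem toZModProd_surjective : Function.Surjective (toZModProd n) := by
  intro t
  obtain ⟨x, hx⟩ := ZMod.intCast_surjective t.toAdd.1
  obtain ⟨y, hy⟩ := ZMod.intCast_surjective t.toAdd.2
  exact ⟨heisenbergHom n ⟨x, y, 0⟩, by rw [toZModProd_heisenbergHom, hx, hy]; rfl⟩

theorem ker_toZModProd : (toZModProd n).ker = commutator (Rgrp n) := by
  refine le_antisymm (fun g hg ↦ ?_) (Abelianization.commutator_subset_ker _)
  obtain ⟨u, rfl⟩ := heisenbergHom_surjective g
  rw [MonoidHom.mem_ker, toZModProd_heisenbergHom, ofAdd_eq_one, Prod.ext_iff] at hg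
  rw [commutator_eq_zpowers_c]
  exact heisenbergHom_mem_zpowers_c ((ZMod.intCast_zmod_eq_zero_iff_dvd _ _).1 hg.1)
    ((ZMod.intCast_zmod_eq_zero_iff_dvd _ _).1 hg.2)

variable (n) in
noncomputable def quotientCommutatorEquiv :
    Rgrp n ⧸ commutator (Rgrp n) ≃* Multiplicative (ZMod (2 ^ n) × ZMod (2 ^ n)) :=
  (QuotientGroup.quotientMulEquivOfEq ker_toZModProd.symm).trans
    (QuotientGroup.quotientKerEquivOfSurjective _ toZModProd_surjective)

end Rgrp

/-- **Basic properties of `R(n)`** for `n ≥ 1`: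
(1) nilpotency class exactly 2; (2) exponent `2^(n+1)`; (3) the center coincides with
the derived subgroup and is cyclic of order `2^n`; (4) `R(n)` modulo its derived
subgroup is isomorphic to `C_{2^n} × C_{2^n}`. -/
theorem stmt_5 (n : ℕ) (hn : 1 ≤ n) :
    (upperCentralSeries (Rgrp n) 2 = ⊤ ∧ upperCentralSeries (Rgrp n) 1 ≠ ⊤) ∧
    (Monoid.exponent (Rgrp n) = 2 ^ (n + 1)) ∧
    (Subgroup.center (Rgrp n) = commutator (Rgrp n) ∧
      IsCyclic (commutator (Rgrp n)) ∧ Nat.card (commutator (Rgrp n)) = 2 ^ n) ∧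
    Nonempty ((Rgrp n ⧸ commutator (Rgrp n)) ≃*
      Multiplicative (ZMod (2 ^ n) × ZMod (2 ^ n))) := by
  have hcenter : Subgroup.center (Rgrp n) = commutator (Rgrp n) := by
    rw [Rgrp.center_eq_zpowers_c hn, Rgrp.commutator_eq_zpowers_c]
  refine ⟨⟨Subgroup.upperCentralSeries_two_eq_top_iff.2 hcenter.ge, ?_⟩, Rgrp.exponent_eq hn,
    ⟨hcenter, ?_, ?_⟩, ⟨Rgrp.quotientCommutatorEquiv n⟩⟩
  · change Subgroup.upperCentralSeries (Rgrp n) 1 ≠ ⊤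
    rw [Subgroup.upperCentralSeries_one]
    exact Rgrp.center_ne_top hn
  · rw [Rgrp.commutator_eq_zpowers_c]
    infer_instance
  · rw [Rgrp.commutator_eq_zpowers_c, Nat.card_zpowers, Rgrp.orderOf_c hn]
end

section
/- Let p be a prime, F a field of characteristic p, and G a finite p-group of nilpotency class at most p − 1. Then for all x, y ∈ I(G) one has (x + y)^p − x^p − y^p ∈ I(G)^{p+1}, and for all x ∈ I(G) and z ∈ I(G)² one has (x + z)^p − x^p ∈ I(G)^{p+1}. Consequently, the p-power map induces a well-defined ring homomorphism I(G)/I(G)² → I(G)^p/I(G)^{p+1}. -/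
/-!
Jacobson's argument. Put `u = x + t y` over `A[t]`. In characteristic `p` the `t`-derivative
of `u ^ p` is `∑ uʲ y u^(p-1-j) = ad(u)^(p-1) y`, so for `0 < i < p` the coefficient of `tⁱ` in
`u ^ p` is, up to the unit `i`, a coefficient of a `(p-1)`-fold iterated commutator of `x` and
`y`; these coefficients add up to `(x + y)^p - x^p - y^p`.

In the group algebra, iterated commutators with elements of `I = I(G)` are controlled by the
filtration `Φₙ = span {g (c - 1) | c ∈ γₙ₊₁(G)} + I^(n+2)`: since `c - 1 ∈ I^(n+1)` for
`c ∈ γₙ₊₁(G)`, commuting with `I` moves `Φₙ` into `Φₙ₊₁`. Class at most `p - 1` means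
`γₚ(G) = 1`, so `Φₚ₋₁ = I^(p+1)`. The other two statements only use that `z ^ p`, `(x y) ^ p`
and `x ^ p y ^ p` lie in `I^(2p)`.
-/

section CharP

open Finset Polynomial

theorem Nat.Prime.choose_pred_cast_eq_neg_one_pow {p k : ℕ} (hp : p.Prime) (hk : k < p) :
    ((p - 1).choose k : ZMod p) = (-1) ^ k := by
  induction k with
  | zero => simp
  | succ k ih =>
    have hpascal : (p - 1).choose k + (p - 1).choose (k + 1) = p.choose (k + 1) := by
      conv_rhs => rw [← Nat.sub_add_cancel hp.one_le]
      rw [Nat.choose_succ_succ]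
    have hzero : (p.choose (k + 1) : ZMod p) = 0 :=
      (ZMod.natCast_eq_zero_iff _ _).mpr (hp.dvd_choose_self k.succ_ne_zero hk)
    have := congrArg (Nat.cast : ℕ → ZMod p) hpascal
    push_cast at this
    rw [ih (by omega), hzero] at this
    linear_combination this

theorem Commute.sub_pow_pred_eq_geom_sum₂ {E : Type*} [Ring E] {p : ℕ} (hp : p.Prime)
    (hE : (p : E) = 0) {x y : E} (h : Commute x y) :
    (x - y) ^ (p - 1) = ∑ i ∈ range p, x ^ i * y ^ (p - 1 - i) := by
  have hcoeff : ∀ k < p, (-1 : E) ^ (p - 1 - k) * (p - 1).choose k = 1 := by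
    intro k hk
    set c : ℤ := (-1) ^ (p - 1 - k) * (p - 1).choose k
    have hmod : ((1 : ℤ) : ZMod p) = c := by
      push_cast [c]
      rw [hp.choose_pred_cast_eq_neg_one_pow hk, ← pow_add, Nat.sub_add_cancel (by omega)]
      rcases hp.eq_two_or_odd' with rfl | hodd
      · decide
      · exact (Nat.Odd.sub_odd hodd odd_one).neg_one_pow.symm
    obtain ⟨m, hm⟩ := (ZMod.intCast_eq_intCast_iff_dvd_sub 1 c p).mp hmod
    have hc : (c : E) = 1 := by
      rw [← sub_add_cancel c 1, hm]
      push_cast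
      rw [hE, zero_mul, zero_add]
    exact_mod_cast hc
  rw [sub_eq_add_neg, h.neg_right.add_pow, Nat.sub_add_cancel hp.one_le]
  refine sum_congr rfl fun k hk => ?_
  rw [neg_pow', mul_assoc, mul_assoc, ← mul_assoc (_ ^ _), hcoeff k (mem_range.mp hk), mul_one]

theorem iterate_commutator_eq_sum {S : Type*} [Ring S] {p : ℕ} (hp : p.Prime) (hS : (p : S) = 0)
    (a b : S) :
    (fun w => a * w - w * a)^[p - 1] b = ∑ i ∈ range p, a ^ i * b * a ^ (p - 1 - i) := by
  have hE : (p : Module.End ℤ S) = 0 := by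
    ext w
    simp [hS]
  have had : (fun w => a * w - w * a) = ⇑(LinearMap.mulLeft ℤ a - LinearMap.mulRight ℤ a) := by
    ext w
    simp
  rw [had, ← Module.End.pow_apply,
    (LinearMap.commute_mulLeft_right a a).sub_pow_pred_eq_geom_sum₂ hp hE, LinearMap.sum_apply]
  simp [LinearMap.pow_mulLeft, LinearMap.pow_mulRight, mul_assoc]

theorem Polynomial.derivative_pow_eq_sum {R : Type*} [Semiring R] (f : R[X]) (n : ℕ) :
    derivative (f ^ n) = ∑ i ∈ range n, f ^ i * derivative f * f ^ (n - 1 - i) := by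
  induction n with
  | zero => simp
  | succ n ih =>
    rw [pow_succ, derivative_mul, ih, sum_mul, sum_range_succ, Nat.add_sub_cancel, Nat.sub_self,
      pow_zero, mul_one]
    congr 1
    refine sum_congr rfl fun i hi => ?_
    rw [mul_assoc _ (f ^ _), ← pow_succ]
    congr 2
    have := mem_range.mp hi
    omega

theorem AddSubgroup.mem_of_nsmul_mem_of_coprime {M : Type*} [AddCommGroup M] (H : AddSubgroup M)
    {m p : ℕ} (hmp : m.Coprime p) {w : M} (hpw : p • w = 0) (hmw : m • w ∈ H) : w ∈ H := by
  have hbezout := Nat.gcd_eq_gcd_ab m p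
  rw [hmp.gcd_eq_one, Nat.cast_one] at hbezout
  have hw : w = m.gcdA p • (m • w) + m.gcdB p • (p • w) := by
    rw [← natCast_zsmul, ← natCast_zsmul, smul_smul, smul_smul, ← add_smul, mul_comm,
      mul_comm _ (p : ℤ), ← hbezout, one_smul]
  rw [hw, hpw, smul_zero, add_zero]
  exact H.zsmul_mem hmw _

theorem Polynomial.add_pow_sub_pow_sub_pow_eq_sum_coeff {S : Type*} [Ring S] (x y : S) {n : ℕ}
    (hn : n ≠ 0) :
    (x + y) ^ n - x ^ n - y ^ n = ∑ i ∈ range (n - 1), ((C x + C y * X) ^ n).coeff (i + 1) := by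
  have hdeg : (C x + C y * X).natDegree ≤ 1 := add_comm (C x) _ ▸ natDegree_linear_le
  have hsum : (x + y) ^ n = ∑ i ∈ range (n + 1), ((C x + C y * X) ^ n).coeff i := by
    let eval₁ : S[X] →+* S := eval₂RingHom' (RingHom.id S) 1 fun a => Commute.one_right a
    have hu : eval₁ (C x + C y * X) = x + y := by simp [eval₁]
    rw [← hu, ← map_pow, eval₂RingHom'_apply, eval₂_eq_sum_range' _ (n := n + 1) (by
      grw [natDegree_pow_le, hdeg, mul_one]; omega)]
    simp
  have hlow : ((C x + C y * X) ^ n).coeff 0 = x ^ n := by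
    rw [← constantCoeff_apply, map_pow]
    simp
  have htop : ((C x + C y * X) ^ n).coeff n = y ^ n := by
    simpa using coeff_pow_of_natDegree_le (m := n) hdeg
  obtain ⟨n, rfl⟩ := Nat.exists_eq_add_one_of_ne_zero hn
  rw [hsum, sum_range_succ, sum_range_succ', hlow, htop, Nat.add_sub_cancel]
  abel

variable {S : Type*} [Ring S] (V : ℕ → AddSubgroup S) {x y : S}

theorem Polynomial.coeff_commutator_C_add_C_mul_X_mem
    (hx : ∀ n, ∀ w ∈ V n, x * w - w * x ∈ V (n + 1))
    (hy : ∀ n, ∀ w ∈ V n, y * w - w * y ∈ V (n + 1))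
    {m : ℕ} {f : S[X]} (hf : ∀ i, f.coeff i ∈ V m) (i : ℕ) :
    ((C x + C y * X) * f - f * (C x + C y * X)).coeff i ∈ V (m + 1) := by
  have hsplit : (C x + C y * X) * f - f * (C x + C y * X)
      = (C x * f - f * C x) + (C y * f - f * C y) * X := by
    rw [add_mul, mul_add, mul_assoc (C y), (commute_X f).eq, ← mul_assoc f]
    noncomm_ring
  rw [hsplit, coeff_add, coeff_sub, coeff_C_mul, coeff_mul_C]
  rcases i with _ | i
  · simpa using hx m _ (hf 0)
  · rw [coeff_mul_X, coeff_sub, coeff_C_mul, coeff_mul_C]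
    exact add_mem (hx m _ (hf _)) (hy m _ (hf _))

theorem add_pow_sub_pow_sub_pow_mem_of_commutator_mem {p : ℕ} (hp : p.Prime) (hS : (p : S) = 0)
    (hx : ∀ n, ∀ w ∈ V n, x * w - w * x ∈ V (n + 1))
    (hy : ∀ n, ∀ w ∈ V n, y * w - w * y ∈ V (n + 1)) (hy₀ : y ∈ V 0) :
    (x + y) ^ p - x ^ p - y ^ p ∈ V (p - 1) := by
  set u : S[X] := C x + C y * X
  have hiter (m i : ℕ) : ((fun f => u * f - f * u)^[m] (C y)).coeff i ∈ V m := by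
    induction m generalizing i with
    | zero => rw [Function.iterate_zero_apply, coeff_C]; split_ifs <;> simp [hy₀]
    | succ m ih =>
      rw [Function.iterate_succ_apply']
      exact coeff_commutator_C_add_C_mul_X_mem V hx hy ih i
  have hderiv : derivative (u ^ p) = (fun f => u * f - f * u)^[p - 1] (C y) := by
    rw [derivative_pow_eq_sum, iterate_commutator_eq_sum hp (by rw [← C_eq_natCast, hS, C_0])]
    simp [u]
  rw [add_pow_sub_pow_sub_pow_eq_sum_coeff x y hp.ne_zero]
  refine sum_mem fun i hi => ?_
  have hcoprime : (i + 1).Coprime p := Nat.Coprime.symm <| hp.coprime_iff_not_dvd.mpr <|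
    Nat.not_dvd_of_pos_of_lt i.succ_pos (by have := mem_range.mp hi; omega)
  refine (V (p - 1)).mem_of_nsmul_mem_of_coprime hcoprime (by simp [nsmul_eq_mul, hS]) ?_
  have := hiter (p - 1) i
  rwa [← hderiv, coeff_derivative, ← Nat.cast_succ, ← nsmul_eq_mul'] at this

end CharP

theorem Ideal.mul_mem_pow_add {R : Type*} [Semiring R] {I : Ideal R} [I.IsTwoSided] {a b : R}
    {m n : ℕ} (ha : a ∈ I ^ m) (hb : b ∈ I ^ n) : a * b ∈ I ^ (m + n) :=
  Ideal.IsTwoSided.pow_add (I := I) m n ▸ Ideal.mul_mem_mul ha hb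

theorem Ideal.pow_mem_pow_mul {R : Type*} [Semiring R] {I : Ideal R} [I.IsTwoSided] {a : R}
    {m : ℕ} (ha : a ∈ I ^ m) (n : ℕ) : a ^ n ∈ I ^ (m * n) := by
  induction n with
  | zero =>
    rw [pow_zero, Nat.mul_zero, Submodule.pow_zero, Ideal.one_eq_top]
    exact Submodule.mem_top
  | succ n ih => exact pow_succ a n ▸ Ideal.mul_mem_pow_add ih ha

noncomputable section

open Submodule
open scoped commutatorElement

namespace MonoidAlgebra

variable (k G : Type*) [CommRing k] [Group G]

abbrev augmentationIdeal : Ideal (MonoidAlgebra k G) := RingHom.ker (lift k k G 1)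

def dimensionSubgroup (n : ℕ) : Subgroup G :=
  ((Units.map (Ideal.Quotient.mk (augmentationIdeal k G ^ n)).toMonoidHom).comp
    (of k G).toHomUnits).ker

/-- `lowerCentralSeries ⊤ n` is `γₙ₊₁(G)`, hence the shifted indices. -/
def commutatorFiltration (n : ℕ) : Submodule k (MonoidAlgebra k G) :=
  span k {z | ∃ g, ∃ c ∈ Subgroup.lowerCentralSeries (⊤ : Subgroup G) n,
    z = of k G g * (of k G c - 1)} ⊔ (augmentationIdeal k G ^ (n + 2)).restrictScalars k

variable {k G}

theorem of_sub_one_mem_augmentationIdeal (g : G) : of k G g - 1 ∈ augmentationIdeal k G := by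
  simp [RingHom.mem_ker]

theorem mem_span_of_sub_one_of_mem_augmentationIdeal {x : MonoidAlgebra k G}
    (hx : x ∈ augmentationIdeal k G) : x ∈ span k (Set.range fun g => of k G g - 1) := by
  suffices ∀ y, y - lift k k G 1 y • 1 ∈ span k (Set.range fun g => of k G g - 1) by
    simpa [RingHom.mem_ker.mp hx] using this x
  intro y
  induction y using MonoidAlgebra.induction_on with
  | of g => simpa using subset_span (Set.mem_range_self (f := fun g => of k G g - 1) g)
  | add a b ha hb => convert add_mem ha hb using 1; simp only [map_add, add_smul]; abel
  | smul r a ha => convert smul_mem _ r ha using 1; simp [smul_sub, smul_smul]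

theorem mem_dimensionSubgroup {n : ℕ} {g : G} :
    g ∈ dimensionSubgroup k G n ↔ of k G g - 1 ∈ augmentationIdeal k G ^ n := by
  rw [dimensionSubgroup, MonoidHom.mem_ker, Units.ext_iff]
  exact Ideal.Quotient.eq

theorem of_commutatorElement_sub_one (x g : G) :
    of k G ⁅x, g⁆ - 1 = ((of k G x - 1) * (of k G g - 1) - (of k G g - 1) * (of k G x - 1)) *
      of k G (g * x)⁻¹ := by
  have hinv : of k G (g * x) * of k G (g * x)⁻¹ = 1 := by rw [← map_mul, mul_inv_cancel, map_one]
  calc of k G ⁅x, g⁆ - 1 = (of k G (x * g) - of k G (g * x)) * of k G (g * x)⁻¹ := by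
        rw [sub_mul, hinv, ← map_mul, commutatorElement_def, mul_inv_rev, ← mul_assoc]
    _ = _ := by rw [map_mul, map_mul]; noncomm_ring

theorem lowerCentralSeries_le_dimensionSubgroup (n : ℕ) :
    Subgroup.lowerCentralSeries (⊤ : Subgroup G) n ≤ dimensionSubgroup k G (n + 1) := by
  refine Subgroup.descending_central_series_ge_lower (fun n => dimensionSubgroup k G (n + 1))
    ⟨?_, fun x n hx g => ?_⟩ n
  · exact eq_top_iff.mpr fun g _ => mem_dimensionSubgroup.mpr <| by
      rw [zero_add, Submodule.pow_one]
      exact of_sub_one_mem_augmentationIdeal g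
  · rw [mem_dimensionSubgroup] at hx ⊢
    have hg : of k G g - 1 ∈ augmentationIdeal k G ^ 1 := by
      rw [Submodule.pow_one]
      exact of_sub_one_mem_augmentationIdeal g
    rw [of_commutatorElement_sub_one]
    refine Ideal.mul_mem_right _ _ (sub_mem (Ideal.mul_mem_pow_add hx hg) ?_)
    rw [add_comm (n + 1)]
    exact Ideal.mul_mem_pow_add hg hx

theorem of_sub_one_mem_pow_of_mem_lowerCentralSeries {n : ℕ} {c : G}
    (hc : c ∈ Subgroup.lowerCentralSeries (⊤ : Subgroup G) n) :
    of k G c - 1 ∈ augmentationIdeal k G ^ (n + 1) :=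
  mem_dimensionSubgroup.mp (lowerCentralSeries_le_dimensionSubgroup n hc)

theorem mem_commutatorFiltration_zero_of_mem_augmentationIdeal {x : MonoidAlgebra k G}
    (hx : x ∈ augmentationIdeal k G) : x ∈ commutatorFiltration k G 0 := by
  refine mem_sup_left (span_mono ?_ (mem_span_of_sub_one_of_mem_augmentationIdeal hx))
  rintro _ ⟨g, rfl⟩
  exact ⟨1, g, Subgroup.mem_top g, by rw [map_one, one_mul]⟩

theorem commutatorFiltration_le_of_lowerCentralSeries_eq_bot {n : ℕ}
    (hn : Subgroup.lowerCentralSeries (⊤ : Subgroup G) n = ⊥) :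
    commutatorFiltration k G n ≤ (augmentationIdeal k G ^ (n + 2)).restrictScalars k := by
  refine sup_le (span_le.mpr ?_) le_rfl
  rintro _ ⟨g, c, hc, rfl⟩
  rw [hn, Subgroup.mem_bot] at hc
  rw [hc, map_one, sub_self, mul_zero]
  exact zero_mem _

theorem commutator_of_of_mul_of_sub_one_eq (h g c : G) :
    of k G h * (of k G g * (of k G c - 1)) - of k G g * (of k G c - 1) * of k G h =
      of k G (h * g * (h⁻¹ * c * h)) * (of k G ⁅h⁻¹, c⁻¹⁆ - 1) +
        of k G (g * h) * ((of k G ⁅h⁻¹, g⁻¹⁆ - 1) * (of k G (h⁻¹ * c * h) - 1)) := by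
  simp only [commutatorElement_def, inv_inv, mul_sub, sub_mul, mul_one, one_mul, ← map_mul,
    mul_assoc, inv_mul_cancel_left, mul_inv_cancel_left]
  abel

theorem commutator_of_mem_commutatorFiltration_succ {n : ℕ} (h g c : G)
    (hc : c ∈ Subgroup.lowerCentralSeries (⊤ : Subgroup G) n) :
    of k G h * (of k G g * (of k G c - 1)) - of k G g * (of k G c - 1) * of k G h ∈
      commutatorFiltration k G (n + 1) := by
  rw [commutator_of_of_mul_of_sub_one_eq]
  refine add_mem (mem_sup_left (subset_span ⟨_, _, ?_, rfl⟩)) (mem_sup_right ?_)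
  · rw [Subgroup.lowerCentralSeries_succ, Subgroup.commutator_comm]
    exact Subgroup.commutator_mem_commutator (Subgroup.mem_top _) (inv_mem hc)
  · have hcomm : ⁅h⁻¹, g⁻¹⁆ ∈ Subgroup.lowerCentralSeries (⊤ : Subgroup G) 1 :=
      Subgroup.commutator_mem_commutator (Subgroup.mem_top _) (Subgroup.mem_top _)
    have hconj : h⁻¹ * c * h ∈ Subgroup.lowerCentralSeries (⊤ : Subgroup G) n := by
      simpa using (Subgroup.lowerCentralSeries_normal _ n).conj_mem c hc h⁻¹
    have := Ideal.mul_mem_pow_add (of_sub_one_mem_pow_of_mem_lowerCentralSeries (k := k) hcomm)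
      (of_sub_one_mem_pow_of_mem_lowerCentralSeries (k := k) hconj)
    rw [show 1 + 1 + (n + 1) = n + 1 + 2 by omega] at this
    exact Ideal.mul_mem_left _ _ this

theorem commutator_mem_commutatorFiltration_succ {n : ℕ} {z w : MonoidAlgebra k G}
    (hz : z ∈ augmentationIdeal k G) (hw : w ∈ commutatorFiltration k G n) :
    z * w - w * z ∈ commutatorFiltration k G (n + 1) := by
  let B : MonoidAlgebra k G →ₗ[k] MonoidAlgebra k G →ₗ[k] MonoidAlgebra k G :=
    LinearMap.mul k _ - (LinearMap.mul k _).flip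
  suffices map₂ B (span k (Set.range fun g => of k G g - 1)) (commutatorFiltration k G n) ≤
      commutatorFiltration k G (n + 1) by
    simpa [B] using map₂_le.mp this z (mem_span_of_sub_one_of_mem_augmentationIdeal hz) w hw
  rw [commutatorFiltration, map₂_sup_right, map₂_span_span, sup_le_iff, span_le]
  constructor
  · rintro _ ⟨_, ⟨h, rfl⟩, _, ⟨g, c, hc, rfl⟩, rfl⟩
    simpa [B] using commutator_of_mem_commutatorFiltration_succ (k := k) h g c hc
  · refine map₂_le.mpr fun z hz w hw => mem_sup_right ?_
    have hz : z ∈ augmentationIdeal k G ^ 1 := by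
      rw [Submodule.pow_one]
      exact (span_le (p := (augmentationIdeal k G).restrictScalars k)).mpr
        (Set.range_subset_iff.mpr of_sub_one_mem_augmentationIdeal) hz
    have hzw := Ideal.mul_mem_pow_add hz hw
    have hwz := Ideal.mul_mem_pow_add hw hz
    rw [show 1 + (n + 2) = n + 1 + 2 by omega] at hzw
    simpa [B] using sub_mem hzw hwz

end MonoidAlgebra

end

theorem stmt_6_general {p : ℕ} (hp : p.Prime) (F : Type*) [Field F] [CharP F p]
    (G : Type*) [Group G]
    (hclass : upperCentralSeries G (p - 1) = ⊤)
    (I : Ideal (MonoidAlgebra F G))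
    (hI : I = RingHom.ker ((MonoidAlgebra.lift F F G) 1)) :
    (∀ x y : MonoidAlgebra F G, x ∈ I → y ∈ I →
        (x + y) ^ p - x ^ p - y ^ p ∈ I ^ (p + 1)) ∧
    (∀ x z : MonoidAlgebra F G, x ∈ I → z ∈ I ^ 2 →
        (x + z) ^ p - x ^ p ∈ I ^ (p + 1)) ∧
    (∀ x y : MonoidAlgebra F G, x ∈ I → y ∈ I →
        (x * y) ^ p - x ^ p * y ^ p ∈ I ^ (p + 1)) := by
  obtain rfl : I = MonoidAlgebra.augmentationIdeal F G := hI
  set I := MonoidAlgebra.augmentationIdeal F G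
  have hS : (p : MonoidAlgebra F G) = 0 := by
    rw [← map_natCast (algebraMap F _), CharP.cast_eq_zero, map_zero]
  have hγ := Subgroup.lowerCentralSeries_eq_bot_iff_upperCentralSeries_eq_top.mpr hclass
  have hadd (x y : MonoidAlgebra F G) (hx : x ∈ I) (hy : y ∈ I) :
      (x + y) ^ p - x ^ p - y ^ p ∈ I ^ (p + 1) := by
    have h := MonoidAlgebra.commutatorFiltration_le_of_lowerCentralSeries_eq_bot hγ <|
      add_pow_sub_pow_sub_pow_mem_of_commutator_mem
        (fun n => (MonoidAlgebra.commutatorFiltration F G n).toAddSubgroup) hp hS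
        (fun _ _ => MonoidAlgebra.commutator_mem_commutatorFiltration_succ hx)
        (fun _ _ => MonoidAlgebra.commutator_mem_commutatorFiltration_succ hy)
        (MonoidAlgebra.mem_commutatorFiltration_zero_of_mem_augmentationIdeal hy)
    rwa [show p - 1 + 2 = p + 1 by have := hp.two_le; omega] at h
  have hle : I ^ (2 * p) ≤ I ^ (p + 1) := Ideal.pow_le_pow_right (by have := hp.two_le; omega)
  refine ⟨hadd, fun x z hx hz => ?_, fun x y hx hy => ?_⟩
  · have hz₁ : z ∈ I := Ideal.pow_le_self two_ne_zero hz
    simpa using add_mem (hadd x z hx hz₁) (hle (Ideal.pow_mem_pow_mul hz p))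
  · rw [← Submodule.pow_one I] at hx hy
    have hxy := Ideal.pow_mem_pow_mul (Ideal.mul_mem_pow_add hx hy) p
    have hxpyp := Ideal.mul_mem_pow_add (Ideal.pow_mem_pow_mul hx p) (Ideal.pow_mem_pow_mul hy p)
    rw [one_mul, ← two_mul] at hxpyp
    exact sub_mem (hle hxy) (hle hxpyp)

/-- **The `p`-power map on `I(G)/I(G)²`.** Let `F` be a field of characteristic `p` and
`G` a finite `p`-group of nilpotency class at most `p - 1`, and let `I` be the
augmentation ideal of `FG`. Then `(x+y)^p - x^p - y^p ∈ I^(p+1)` for `x, y ∈ I`,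
`(x+z)^p - x^p ∈ I^(p+1)` for `x ∈ I`, `z ∈ I²`, and `(xy)^p - x^p y^p ∈ I^(p+1)` for
`x, y ∈ I`; i.e. the `p`-power map induces a well-defined ring homomorphism
`I/I² → I^p/I^(p+1)`. -/
theorem stmt_6 {p : ℕ} (hp : p.Prime) (F : Type*) [Field F] [CharP F p]
    (G : Type*) [Group G] [Finite G] (hpG : IsPGroup p G)
    (hclass : upperCentralSeries G (p - 1) = ⊤)
    (I : Ideal (MonoidAlgebra F G))
    (hI : I = RingHom.ker ((MonoidAlgebra.lift F F G) 1)) :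
    (∀ x y : MonoidAlgebra F G, x ∈ I → y ∈ I →
        (x + y) ^ p - x ^ p - y ^ p ∈ I ^ (p + 1)) ∧
    (∀ x z : MonoidAlgebra F G, x ∈ I → z ∈ I ^ 2 →
        (x + z) ^ p - x ^ p ∈ I ^ (p + 1)) ∧
    (∀ x y : MonoidAlgebra F G, x ∈ I → y ∈ I →
        (x * y) ^ p - x ^ p * y ^ p ∈ I ^ (p + 1)) :=
  stmt_6_general hp F G hclass I hI
end

section
/- Let F be a field of characteristic 2, n ≥ 1, and let B and B' be non-singular quadratic forms on a 2n-dimensional F-vector space V which are similar, i.e. there exist s ∈ F, s ≠ 0, and a bijective F-linear map A : V → V with B(v) = s·B'(A v) for all v ∈ V. Then for every symplectic basis a₁,…,a_n,b₁,…,b_n of V with respect to the polar form of B and every symplectic basis a'₁,…,a'_n,b'₁,…,b'_n of V with respect to the polar form of B', there exists x ∈ F such that Σ_{i=1}^n B(a_i)·B(b_i) = Σ_{i=1}^n B'(a'_i)·B'(b'_i) + x² + x. -/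
/-!
Pulling `ba'` back along `A` and rescaling its second half by `s⁻¹` gives a symplectic basis of
`B` with the same Arf sum, so it suffices to compare two symplectic bases of one form `B`.
For `T x = x + c C(v, x) v`, which preserves the polar form `C` in characteristic 2, expanding
`B v` in a symplectic basis `e` shows that the Arf sum of `T ∘ e` is that of `e` plus `x² + x`,
with `x = c B(v) + (c² B(v) + c) ∑ C(v, aᵢ) C(v, bᵢ)`, for every `c`. Any two symplectic bases
are joined by such maps: move the pairs into place one at a time, each vector by at most two
maps `T` whose `v` is orthogonal to the pairs already placed.
-/

open QuadraticMap Sum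

section ArtinSchreier

variable (R : Type*) [CommRing R] [CharP R 2]

def artinSchreier : R →+ R := (frobenius R 2).toAddMonoidHom + AddMonoidHom.id R

variable {R}

lemma artinSchreier_apply (x : R) : artinSchreier R x = x ^ 2 + x := rfl

lemma sum_transvected_mul_eq_add_artinSchreier {ι : Type*} [Fintype ι] (α β a d : ι → R) (c P : R)
    (hP : P = ∑ i, (β i ^ 2 * a i + α i ^ 2 * d i + α i * β i)) :
    ∑ i, (a i + c ^ 2 * α i ^ 2 * P + c * α i ^ 2) * (d i + c ^ 2 * β i ^ 2 * P + c * β i ^ 2)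
      = ∑ i, a i * d i
        + artinSchreier R (c * P + (c ^ 2 * P + c) * ∑ i, α i * β i) := by
  have hsplit : ∑ i, (β i ^ 2 * a i + α i ^ 2 * d i) = P - ∑ i, α i * β i := by
    rw [eq_sub_iff_add_eq, hP, ← Finset.sum_add_distrib]
  set σ := ∑ i, α i * β i
  set t := c ^ 2 * P + c
  have hterm : ∀ i, (a i + c ^ 2 * α i ^ 2 * P + c * α i ^ 2)
        * (d i + c ^ 2 * β i ^ 2 * P + c * β i ^ 2)
      = a i * d i + t * (β i ^ 2 * a i + α i ^ 2 * d i) + t ^ 2 * (α i * β i) ^ 2 := by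
    intro i; ring
  rw [Finset.sum_congr rfl fun i _ => hterm i, Finset.sum_add_distrib, Finset.sum_add_distrib,
    ← Finset.mul_sum, ← Finset.mul_sum, hsplit, ← CharTwo.sum_sq, artinSchreier_apply]
  linear_combination (-(t * σ) - c * P * t * σ) * CharTwo.two_eq_zero (R := R)

end ArtinSchreier

namespace QuadraticMap

section CommRing

variable {R V ι : Type*} [CommRing R] [AddCommGroup V] [Module R V] (B : QuadraticForm R V)

lemma map_sum_of_pairwise_polar_eq_zero [Fintype ι] (f : ι → V)
    (h : Pairwise fun i j => polar B (f i) (f j) = 0) : B (∑ i, f i) = ∑ i, B (f i) := by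
  classical
  rw [QuadraticMap.map_sum, add_eq_left]
  refine Finset.sum_eq_zero fun ij hij => ?_
  induction ij using Sym2.ind with
  | _ i j => simpa using h (by simpa using hij)

structure IsSymplecticFamily (e : ι ⊕ ι → V) : Prop where
  polar_inl_inr : ∀ i, polar B (e (inl i)) (e (inr i)) = 1
  polar_inl_inl : ∀ i j, polar B (e (inl i)) (e (inl j)) = 0
  polar_inr_inr : ∀ i j, polar B (e (inr i)) (e (inr j)) = 0
  polar_inl_inr_of_ne : ∀ i j, i ≠ j → polar B (e (inl i)) (e (inr j)) = 0

variable {B}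

namespace IsSymplecticFamily

lemma polar_inr_inl_of_ne {e : ι ⊕ ι → V} (he : IsSymplecticFamily B e) {i j : ι} (hij : i ≠ j) :
    polar B (e (inr i)) (e (inl j)) = 0 := by
  rw [polar_comm]; exact he.polar_inl_inr_of_ne j i hij.symm

lemma polar_eq_zero_of_elim_ne {e : ι ⊕ ι → V} (he : IsSymplecticFamily B e) {j j' : ι ⊕ ι}
    (h : j.elim id id ≠ j'.elim id id) : polar B (e j) (e j') = 0 := by
  rcases j with i | i <;> rcases j' with i' | i'
  · exact he.polar_inl_inl i i'
  · exact he.polar_inl_inr_of_ne i i' h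
  · exact he.polar_inr_inl_of_ne h
  · exact he.polar_inr_inr i i'

lemma polar_inr_eq_repr {e : Module.Basis (ι ⊕ ι) R V} (he : IsSymplecticFamily B e)
    (v : V) (i : ι) : polar B v (e (inr i)) = e.repr v (inl i) := by
  classical
  rw [polar_comm, ← polarBilin_apply_apply, ← e.coord_apply]
  congr 1
  refine e.ext fun j => ?_
  rw [polarBilin_apply_apply, e.coord_apply, e.repr_self, Finsupp.single_apply]
  cases j with
  | inl j =>
    by_cases hij : j = i
    · subst hij; rw [if_pos rfl, polar_comm, he.polar_inl_inr]
    · rw [if_neg (by simpa using hij), he.polar_inr_inl_of_ne (Ne.symm hij)]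
  | inr j => rw [if_neg inl_ne_inr.symm, he.polar_inr_inr]

lemma polar_inl_eq_repr {e : Module.Basis (ι ⊕ ι) R V} (he : IsSymplecticFamily B e)
    (v : V) (i : ι) : polar B v (e (inl i)) = e.repr v (inr i) := by
  classical
  rw [polar_comm, ← polarBilin_apply_apply, ← e.coord_apply]
  congr 1
  refine e.ext fun j => ?_
  rw [polarBilin_apply_apply, e.coord_apply, e.repr_self, Finsupp.single_apply]
  cases j with
  | inl j => rw [if_neg inr_ne_inl.symm, he.polar_inl_inl]
  | inr j =>
    by_cases hij : j = i
    · subst hij; rw [if_pos rfl, he.polar_inl_inr]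
    · rw [if_neg (by simpa using hij), he.polar_inl_inr_of_ne i j (Ne.symm hij)]

lemma apply_eq_sum [Fintype ι] {e : Module.Basis (ι ⊕ ι) R V} (he : IsSymplecticFamily B e)
    (v : V) :
    B v = ∑ i, (polar B v (e (inr i)) ^ 2 * B (e (inl i))
      + polar B v (e (inl i)) ^ 2 * B (e (inr i))
      + polar B v (e (inl i)) * polar B v (e (inr i))) := by
  simp only [he.polar_inl_eq_repr, he.polar_inr_eq_repr]
  set x := fun i => e.repr v (inl i)
  set y := fun i => e.repr v (inr i)
  have hv : v = ∑ i, (x i • e (inl i) + y i • e (inr i)) := by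
    conv_lhs => rw [← e.sum_repr v]
    rw [Fintype.sum_sum_type, ← Finset.sum_add_distrib]
  have horth : Pairwise fun i j =>
      polar B (x i • e (inl i) + y i • e (inr i)) (x j • e (inl j) + y j • e (inr j)) = 0 := by
    intro i j hij
    simp only [polar_add_left, polar_add_right, polar_smul_left, polar_smul_right, smul_eq_mul,
      he.polar_inl_inl, he.polar_inr_inr, he.polar_inl_inr_of_ne i j hij,
      he.polar_inr_inl_of_ne hij]
    ring
  conv_lhs => rw [hv]
  rw [map_sum_of_pairwise_polar_eq_zero B _ horth]
  refine Finset.sum_congr rfl fun i _ => ?_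
  rw [QuadraticMap.map_add B, QuadraticMap.map_smul, QuadraticMap.map_smul, polar_smul_left,
    polar_smul_right, he.polar_inl_inr]
  simp only [smul_eq_mul]
  ring

end IsSymplecticFamily

variable (B)

def polarOrthogonal (X : Set V) : Submodule R V := ⨅ x ∈ X, LinearMap.ker (polarBilin B x)

variable {B}

lemma mem_polarOrthogonal {X : Set V} {v : V} :
    v ∈ B.polarOrthogonal X ↔ ∀ x ∈ X, polar B x v = 0 := by
  simp [polarOrthogonal]

lemma IsSymplecticFamily.apply_mem_polarOrthogonal {e : ι ⊕ ι → V} (he : IsSymplecticFamily B e)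
    {P : Set (ι ⊕ ι)} {j : ι ⊕ ι} (hP : ∀ j' ∈ P, j'.elim id id ≠ j.elim id id) :
    e j ∈ B.polarOrthogonal (e '' P) := by
  rw [mem_polarOrthogonal]
  rintro _ ⟨j', hj', rfl⟩
  exact he.polar_eq_zero_of_elim_ne (hP j' hj')

lemma exists_mem_polar_ne_zero [Nontrivial R] {U : Submodule R V} {g g' h h' : V}
    (hgg' : polar B g g' = 1) (hh'h : polar B h' h = 1) (hg' : g' ∈ U) (hh' : h' ∈ U) :
    ∃ z ∈ U, polar B g z ≠ 0 ∧ polar B z h ≠ 0 := by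
  by_cases hg'h : polar B g' h = 0
  · by_cases hgh' : polar B g h' = 0
    · refine ⟨g' + h', add_mem hg' hh', ?_, ?_⟩ <;>
        simp [polar_add_left, polar_add_right, hgg', hh'h, hg'h, hgh']
    · exact ⟨h', hh', hgh', by simp [hh'h]⟩
  · exact ⟨g', hg', by simp [hgg'], hg'h⟩

end CommRing

section CharTwo

variable {R V ι : Type*} [CommRing R] [CharP R 2] [AddCommGroup V] [Module R V]
  (B : QuadraticForm R V)

lemma polar_self_eq_zero (v : V) : polar B v v = 0 := by
  rw [polar_self, two_nsmul, CharTwo.add_self_eq_zero]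

def polarTransvection (v : V) (c : R) : V ≃ₗ[R] V :=
  LinearEquiv.transvection (f := c • polarBilin B v) (v := v) (by simp [CharTwo.two_eq_zero])

lemma polarTransvection_apply (v : V) (c : R) (x : V) :
    polarTransvection B v c x = x + (c * polar B v x) • v := rfl

lemma polar_polarTransvection (v : V) (c : R) (x y : V) :
    polar B (polarTransvection B v c x) (polarTransvection B v c y) = polar B x y := by
  simp only [polarTransvection_apply, polar_add_left, polar_add_right, polar_smul_left,
    polar_smul_right, smul_eq_mul, polar_self_eq_zero, mul_zero, add_zero]
  rw [polar_comm B x v]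
  linear_combination (c * polar B v x * polar B v y) * CharTwo.two_eq_zero (R := R)

lemma polarTransvection_apply_of_polar_eq_zero {v x : V} (c : R) (h : polar B v x = 0) :
    polarTransvection B v c x = x := by
  simp [polarTransvection_apply, h]

lemma apply_polarTransvection (v : V) (c : R) (x : V) :
    B (polarTransvection B v c x) = B x + c ^ 2 * polar B v x ^ 2 * B v + c * polar B v x ^ 2 := by
  rw [polarTransvection_apply, QuadraticMap.map_add B, QuadraticMap.map_smul, polar_smul_right,
    polar_comm B x v, smul_eq_mul]
  ring

variable {B}

lemma IsSymplecticFamily.comp_polarTransvection {e : ι ⊕ ι → V} (he : IsSymplecticFamily B e)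
    (v : V) (c : R) : IsSymplecticFamily B (polarTransvection B v c ∘ e) where
  polar_inl_inr i := by simpa [polar_polarTransvection] using he.polar_inl_inr i
  polar_inl_inl i j := by simpa [polar_polarTransvection] using he.polar_inl_inl i j
  polar_inr_inr i j := by simpa [polar_polarTransvection] using he.polar_inr_inr i j
  polar_inl_inr_of_ne i j hij := by
    simpa [polar_polarTransvection] using he.polar_inl_inr_of_ne i j hij

variable (B)

def arfInvariant [Fintype ι] (e : ι ⊕ ι → V) : R ⧸ (artinSchreier R).range :=
  (∑ i, B (e (inl i)) * B (e (inr i)) : R)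

variable {B}

lemma IsSymplecticFamily.arfInvariant_comp_polarTransvection [Fintype ι]
    {e : Module.Basis (ι ⊕ ι) R V} (he : IsSymplecticFamily B e) (v : V) (c : R) :
    arfInvariant B (polarTransvection B v c ∘ e) = arfInvariant B e := by
  simp only [arfInvariant, Function.comp_apply, apply_polarTransvection]
  rw [sum_transvected_mul_eq_add_artinSchreier (fun i => polar B v (e (inl i)))
    (fun i => polar B v (e (inr i)))
    _ _ c (B v) (he.apply_eq_sum v), QuotientAddGroup.mk_add,
    (QuotientAddGroup.eq_zero_iff _).2 (AddMonoidHom.mem_range.2 ⟨_, rfl⟩), add_zero]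

end CharTwo

section Field

variable {F V ι κ : Type*} [Field F] [CharP F 2] [AddCommGroup V] [Module F V]
  (B : QuadraticForm F V)

lemma polarTransvection_sub_apply_self {g h : V} (hgh : polar B g h ≠ 0) :
    polarTransvection B (h - g) (polar B g h)⁻¹ g = h := by
  rw [polarTransvection_apply, polar_sub_left, polar_self_eq_zero, sub_zero, polar_comm B h g,
    inv_mul_cancel₀ hgh, one_smul, add_sub_cancel]

def TransvectionReachable (U : Submodule F V) : Module.Basis κ F V → Module.Basis κ F V → Prop :=
  Relation.ReflTransGen fun f f' => ∃ v ∈ U, ∃ c, f' = f.map (polarTransvection B v c)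

variable {B}

namespace TransvectionReachable

variable {U : Submodule F V}

lemma mono {U' : Submodule F V} (hUU' : U ≤ U') {f f' : Module.Basis κ F V}
    (h : TransvectionReachable B U f f') : TransvectionReachable B U' f f' :=
  Relation.ReflTransGen.mono (fun _ _ ⟨v, hv, c, hstep⟩ => ⟨v, hUU' hv, c, hstep⟩) _ _ h

lemma isSymplecticFamily {f f' : Module.Basis (ι ⊕ ι) F V} (h : TransvectionReachable B U f f')
    (hf : IsSymplecticFamily B f) : IsSymplecticFamily B f' := by
  induction h with
  | refl => exact hf
  | tail _ hstep ih =>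
    obtain ⟨v, -, c, rfl⟩ := hstep
    rw [Module.Basis.coe_map]
    exact ih.comp_polarTransvection v c

lemma arfInvariant_eq [Fintype ι] {f f' : Module.Basis (ι ⊕ ι) F V}
    (h : TransvectionReachable B U f f') (hf : IsSymplecticFamily B f) :
    arfInvariant B f' = arfInvariant B f := by
  induction h with
  | refl => rfl
  | tail hprefix hstep ih =>
    obtain ⟨v, -, c, rfl⟩ := hstep
    rw [Module.Basis.coe_map, (isSymplecticFamily hprefix hf).arfInvariant_comp_polarTransvection,
      ih]

lemma apply_eq {f f' : Module.Basis κ F V} (h : TransvectionReachable B U f f') {j : κ}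
    (hj : ∀ v ∈ U, polar B v (f j) = 0) : f' j = f j := by
  induction h with
  | refl => rfl
  | tail _ hstep ih =>
    obtain ⟨v, hv, c, rfl⟩ := hstep
    rw [Module.Basis.map_apply, ih, polarTransvection_apply_of_polar_eq_zero B c (hj v hv)]

lemma eqOn {e : κ → V} {P : Set κ} {f f' : Module.Basis κ F V}
    (h : TransvectionReachable B (B.polarOrthogonal (e '' P)) f f') (hfe : Set.EqOn f e P) :
    Set.EqOn f' e P := fun j hj =>
  (h.apply_eq fun _ hv => by
    rw [polar_comm, hfe hj]
    exact mem_polarOrthogonal.1 hv _ (Set.mem_image_of_mem e hj)).trans (hfe hj)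

end TransvectionReachable

lemma exists_transvectionReachable_apply_eq {U : Submodule F V} (f : Module.Basis κ F V) (j : κ)
    {h : V} (hU : h - f j ∈ U) (hne : polar B (f j) h ≠ 0) :
    ∃ f', TransvectionReachable B U f f' ∧ f' j = h :=
  ⟨_, .single ⟨_, hU, _, rfl⟩,
    by rw [Module.Basis.map_apply, polarTransvection_sub_apply_self B hne]⟩

lemma exists_transvectionReachable_apply_eq_via {U : Submodule F V} (f : Module.Basis κ F V)
    (j : κ) {z h : V} (hz : z - f j ∈ U) (hh : h - z ∈ U) (hfz : polar B (f j) z ≠ 0)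
    (hzh : polar B z h ≠ 0) : ∃ f', TransvectionReachable B U f f' ∧ f' j = h := by
  obtain ⟨f₁, h₁, hf₁⟩ := exists_transvectionReachable_apply_eq f j hz hfz
  obtain ⟨f₂, h₂, hf₂⟩ := exists_transvectionReachable_apply_eq f₁ j (hf₁ ▸ hh) (hf₁ ▸ hzh)
  exact ⟨f₂, h₁.trans h₂, hf₂⟩

lemma exists_transvectionReachable_apply_inl_eq {U : Submodule F V}
    {f : Module.Basis (ι ⊕ ι) F V} (hf : IsSymplecticFamily B f) (k : ι) {a b : V}
    (hab : polar B a b = 1) (hfl : f (inl k) ∈ U) (hfr : f (inr k) ∈ U) (ha : a ∈ U)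
    (hb : b ∈ U) : ∃ f', TransvectionReachable B U f f' ∧ f' (inl k) = a := by
  by_cases hne : polar B (f (inl k)) a = 0
  · obtain ⟨z, hz, hfz, hza⟩ :=
      exists_mem_polar_ne_zero (hf.polar_inl_inr k) (by rwa [polar_comm]) hfr hb
    exact exists_transvectionReachable_apply_eq_via f _ (sub_mem hz hfl) (sub_mem ha hz) hfz hza
  · exact exists_transvectionReachable_apply_eq f _ (sub_mem ha hfl) hne

lemma exists_transvectionReachable_apply_inr_eq {U : Submodule F V}
    {f : Module.Basis (ι ⊕ ι) F V} (hf : IsSymplecticFamily B f) (k : ι) {b : V}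
    (hab : polar B (f (inl k)) b = 1) (ha : f (inl k) ∈ U) (hb : b - f (inr k) ∈ U) :
    ∃ f', TransvectionReachable B U f f' ∧ f' (inr k) = b := by
  by_cases hne : polar B (f (inr k)) b = 0
  -- The detour through `a + b` keeps both transvection vectors orthogonal to `a = f (inl k)`.
  · refine exists_transvectionReachable_apply_eq_via (z := f (inl k) + b) f _ ?_ ?_ ?_ ?_
    · rw [add_sub_assoc]; exact add_mem ha hb
    · rw [sub_add_cancel_right]; exact neg_mem ha
    · rw [polar_add_right, hne, add_zero, polar_comm, hf.polar_inl_inr]; exact one_ne_zero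
    · rw [polar_add_left, hab, polar_self_eq_zero, add_zero]; exact one_ne_zero
  · exact exists_transvectionReachable_apply_eq f _ hb hne

variable {e : ι ⊕ ι → V}

-- `Sum.elim id id ⁻¹' S` indexes the pairs `(inl i, inr i)` with `i ∈ S`.
lemma IsSymplecticFamily.exists_transvectionReachable_eqOn_insert_inl
    (he : IsSymplecticFamily B e) {S : Set ι} {k : ι} (hk : k ∉ S)
    {f : Module.Basis (ι ⊕ ι) F V} (hf : IsSymplecticFamily B f)
    (hfe : Set.EqOn f e (Sum.elim id id ⁻¹' S)) :
    ∃ f', TransvectionReachable B ⊤ f f' ∧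
      Set.EqOn f' e (insert (inl k) (Sum.elim id id ⁻¹' S)) := by
  have hP : ∀ j ∈ Sum.elim id id ⁻¹' S, j.elim id id ≠ k := fun j hj h => hk (h ▸ hj)
  obtain ⟨f', hff', hf'k⟩ := exists_transvectionReachable_apply_inl_eq hf k (he.polar_inl_inr k)
    (hfe.image_eq ▸ hf.apply_mem_polarOrthogonal hP)
    (hfe.image_eq ▸ hf.apply_mem_polarOrthogonal hP)
    (he.apply_mem_polarOrthogonal hP) (he.apply_mem_polarOrthogonal hP)
  refine ⟨f', hff'.mono le_top, fun j hj => ?_⟩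
  rcases hj with rfl | hj
  exacts [hf'k, hff'.eqOn hfe hj]

lemma IsSymplecticFamily.exists_transvectionReachable_eqOn_insert_inr
    (he : IsSymplecticFamily B e) {S : Set ι} {k : ι} (hk : k ∉ S)
    {f : Module.Basis (ι ⊕ ι) F V} (hf : IsSymplecticFamily B f)
    (hfe : Set.EqOn f e (insert (inl k) (Sum.elim id id ⁻¹' S))) :
    ∃ f', TransvectionReachable B ⊤ f f' ∧
      Set.EqOn f' e (insert (inr k) (insert (inl k) (Sum.elim id id ⁻¹' S))) := by
  have hP : ∀ j ∈ Sum.elim id id ⁻¹' S, j.elim id id ≠ k := fun j hj h => hk (h ▸ hj)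
  have hfk : f (inl k) = e (inl k) := hfe (Set.mem_insert _ _)
  have hfe' : Set.EqOn f e (Sum.elim id id ⁻¹' S) := hfe.mono (Set.subset_insert _ _)
  have hmem {v : V} : v ∈ B.polarOrthogonal (e '' insert (inl k) (Sum.elim id id ⁻¹' S)) ↔
      polar B (e (inl k)) v = 0 ∧ v ∈ B.polarOrthogonal (e '' (Sum.elim id id ⁻¹' S)) := by
    rw [Set.image_insert_eq, mem_polarOrthogonal, Set.forall_mem_insert, mem_polarOrthogonal]
  obtain ⟨f', hff', hf'k⟩ := exists_transvectionReachable_apply_inr_eq hf k (b := e (inr k))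
    (by rw [hfk, he.polar_inl_inr])
    (hmem.2 ⟨by rw [hfk, polar_self_eq_zero], hfk ▸ he.apply_mem_polarOrthogonal hP⟩)
    (hmem.2 ⟨by rw [polar_sub_right, he.polar_inl_inr, ← hfk, hf.polar_inl_inr, sub_self],
      sub_mem (he.apply_mem_polarOrthogonal hP)
        (hfe'.image_eq ▸ hf.apply_mem_polarOrthogonal hP)⟩)
  refine ⟨f', hff'.mono le_top, fun j hj => ?_⟩
  rcases hj with rfl | hj
  exacts [hf'k, hff'.eqOn hfe hj]

lemma IsSymplecticFamily.exists_transvectionReachable_eqOn [DecidableEq ι]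
    (he : IsSymplecticFamily B e) (S : Finset ι) {f : Module.Basis (ι ⊕ ι) F V}
    (hf : IsSymplecticFamily B f) :
    ∃ f', TransvectionReachable B ⊤ f f' ∧ Set.EqOn f' e (Sum.elim id id ⁻¹' S) := by
  induction S using Finset.induction_on with
  | empty => exact ⟨f, .refl, by simp [Set.EqOn]⟩
  | insert k S hk ih =>
    obtain ⟨f₁, h₁, hf₁⟩ := ih
    have hsymp₁ := h₁.isSymplecticFamily hf
    obtain ⟨f₂, h₂, hf₂⟩ := he.exists_transvectionReachable_eqOn_insert_inl (S := S) hk hsymp₁ hf₁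
    obtain ⟨f₃, h₃, hf₃⟩ := he.exists_transvectionReachable_eqOn_insert_inr hk
      (h₂.isSymplecticFamily hsymp₁) hf₂
    refine ⟨f₃, h₁.trans (h₂.trans h₃), hf₃.mono ?_⟩
    rintro (i | i) hi <;> simp_all

theorem IsSymplecticFamily.arfInvariant_eq [Fintype ι] {e f : Module.Basis (ι ⊕ ι) F V}
    (he : IsSymplecticFamily B e) (hf : IsSymplecticFamily B f) :
    arfInvariant B e = arfInvariant B f := by
  classical
  obtain ⟨f', hff', hf'e⟩ := he.exists_transvectionReachable_eqOn Finset.univ hf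
  have : ⇑f' = ⇑e := funext fun j => hf'e (by simp)
  rw [← hff'.arfInvariant_eq hf, this]

lemma exists_isSymplecticFamily_arfInvariant_eq_of_similar {W : Type*} [AddCommGroup W]
    [Module F W] [Fintype ι] {B' : QuadraticForm F W} {s : F} (hs : s ≠ 0) (A : V ≃ₗ[F] W)
    (hsim : ∀ v, B v = s * B' (A v)) {e' : Module.Basis (ι ⊕ ι) F W}
    (he' : IsSymplecticFamily B' e') :
    ∃ e : Module.Basis (ι ⊕ ι) F V, IsSymplecticFamily B e ∧
      arfInvariant B e = arfInvariant B' e' := by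
  have hB (w : W) : B (A.symm w) = s * B' w := by rw [hsim, A.apply_symm_apply]
  have hpolar (w w' : W) : polar B (A.symm w) (A.symm w') = s * polar B' w w' := by
    simp only [polar, ← map_add, hB]; ring
  let e := (e'.map A.symm).isUnitSMul (w := Sum.elim 1 fun _ => s⁻¹)
    (by rintro (i | i) <;> simp [hs])
  have hel (i : ι) : e (inl i) = A.symm (e' (inl i)) := by simp [e, Module.Basis.isUnitSMul_apply]
  have her (i : ι) : e (inr i) = s⁻¹ • A.symm (e' (inr i)) := by
    simp [e, Module.Basis.isUnitSMul_apply]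
  refine ⟨e, ⟨fun i => ?_, fun i j => ?_, fun i j => ?_, fun i j hij => ?_⟩, ?_⟩
  · rw [hel, her, polar_smul_right, hpolar, he'.polar_inl_inr, smul_eq_mul, mul_one,
      inv_mul_cancel₀ hs]
  · rw [hel, hel, hpolar, he'.polar_inl_inl, mul_zero]
  · rw [her, her, polar_smul_left, polar_smul_right, hpolar, he'.polar_inr_inr]; simp
  · rw [hel, her, polar_smul_right, hpolar, he'.polar_inl_inr_of_ne i j hij, mul_zero, smul_zero]
  · simp only [arfInvariant, hel, her, QuadraticMap.map_smul, hB, smul_eq_mul]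
    congr 1
    refine Finset.sum_congr rfl fun i _ => ?_
    field_simp

end Field

end QuadraticMap

theorem stmt_8_general (F : Type*) [Field F] [CharP F 2]
    (V : Type*) [AddCommGroup V] [Module F V]
    (n : ℕ)
    (B B' : QuadraticForm F V)
    (s : F) (hs : s ≠ 0) (A : V ≃ₗ[F] V)
    (hsim : ∀ v : V, B v = s * B' (A v))
    (ba : Module.Basis (Fin n ⊕ Fin n) F V)
    (hba1 : ∀ i : Fin n, QuadraticMap.polar B (ba (Sum.inl i)) (ba (Sum.inr i)) = 1)
    (hba2 : ∀ i j : Fin n, QuadraticMap.polar B (ba (Sum.inl i)) (ba (Sum.inl j)) = 0)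
    (hba3 : ∀ i j : Fin n, QuadraticMap.polar B (ba (Sum.inr i)) (ba (Sum.inr j)) = 0)
    (hba4 : ∀ i j : Fin n, i ≠ j →
      QuadraticMap.polar B (ba (Sum.inl i)) (ba (Sum.inr j)) = 0)
    (ba' : Module.Basis (Fin n ⊕ Fin n) F V)
    (hba'1 : ∀ i : Fin n, QuadraticMap.polar B' (ba' (Sum.inl i)) (ba' (Sum.inr i)) = 1)
    (hba'2 : ∀ i j : Fin n, QuadraticMap.polar B' (ba' (Sum.inl i)) (ba' (Sum.inl j)) = 0)
    (hba'3 : ∀ i j : Fin n, QuadraticMap.polar B' (ba' (Sum.inr i)) (ba' (Sum.inr j)) = 0)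
    (hba'4 : ∀ i j : Fin n, i ≠ j →
      QuadraticMap.polar B' (ba' (Sum.inl i)) (ba' (Sum.inr j)) = 0) :
    ∃ x : F, (∑ i : Fin n, B (ba (Sum.inl i)) * B (ba (Sum.inr i)))
      = (∑ i : Fin n, B' (ba' (Sum.inl i)) * B' (ba' (Sum.inr i))) + x ^ 2 + x := by
  obtain ⟨e, he, hee'⟩ := exists_isSymplecticFamily_arfInvariant_eq_of_similar hs A hsim
    (IsSymplecticFamily.mk hba'1 hba'2 hba'3 hba'4)
  have harf := (IsSymplecticFamily.mk hba1 hba2 hba3 hba4).arfInvariant_eq he |>.trans hee'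
  obtain ⟨x, hx⟩ := QuotientAddGroup.eq.1 harf.symm
  exact ⟨x, by rw [artinSchreier_apply] at hx; linear_combination -hx⟩

/-- **Arf invariants of similar non-singular quadratic forms in characteristic 2 agree
up to an element of `{x² + x}`.** If `B`, `B'` are non-singular quadratic forms on a
`2n`-dimensional space `V` over a field `F` of characteristic 2 with `B = s·(B' ∘ A)`
for some `s ≠ 0` and bijective linear `A`, then for any symplectic bases with respect to
the polar forms of `B` resp. `B'`, the corresponding Arf invariants differ by `x² + x`
for some `x ∈ F`. -/
theorem stmt_8 (F : Type*) [Field F] [CharP F 2]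
    (V : Type*) [AddCommGroup V] [Module F V]
    (n : ℕ) (hn : 1 ≤ n) (hdim : Module.finrank F V = 2 * n)
    (B B' : QuadraticForm F V)
    (hB : ∀ v : V, (∀ w : V, QuadraticMap.polar B v w = 0) → v = 0)
    (hB' : ∀ v : V, (∀ w : V, QuadraticMap.polar B' v w = 0) → v = 0)
    (s : F) (hs : s ≠ 0) (A : V ≃ₗ[F] V)
    (hsim : ∀ v : V, B v = s * B' (A v))
    (ba : Module.Basis (Fin n ⊕ Fin n) F V)
    (hba1 : ∀ i : Fin n, QuadraticMap.polar B (ba (Sum.inl i)) (ba (Sum.inr i)) = 1)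
    (hba2 : ∀ i j : Fin n, QuadraticMap.polar B (ba (Sum.inl i)) (ba (Sum.inl j)) = 0)
    (hba3 : ∀ i j : Fin n, QuadraticMap.polar B (ba (Sum.inr i)) (ba (Sum.inr j)) = 0)
    (hba4 : ∀ i j : Fin n, i ≠ j →
      QuadraticMap.polar B (ba (Sum.inl i)) (ba (Sum.inr j)) = 0)
    (ba' : Module.Basis (Fin n ⊕ Fin n) F V)
    (hba'1 : ∀ i : Fin n, QuadraticMap.polar B' (ba' (Sum.inl i)) (ba' (Sum.inr i)) = 1)
    (hba'2 : ∀ i j : Fin n, QuadraticMap.polar B' (ba' (Sum.inl i)) (ba' (Sum.inl j)) = 0)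
    (hba'3 : ∀ i j : Fin n, QuadraticMap.polar B' (ba' (Sum.inr i)) (ba' (Sum.inr j)) = 0)
    (hba'4 : ∀ i j : Fin n, i ≠ j →
      QuadraticMap.polar B' (ba' (Sum.inl i)) (ba' (Sum.inr j)) = 0) :
    ∃ x : F, (∑ i : Fin n, B (ba (Sum.inl i)) * B (ba (Sum.inr i)))
      = (∑ i : Fin n, B' (ba' (Sum.inl i)) * B' (ba' (Sum.inr i))) + x ^ 2 + x :=
  stmt_8_general F V n B B' s hs A hsim ba hba1 hba2 hba3 hba4 ba' hba'1 hba'2 hba'3 hba'4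
end

section
/- Let F be a finite field of characteristic 2. There is no bijective F-linear map λ : F⁴ → F⁴ such that the image under λ of V(f₂,h₂) equals V(g₂,h₂). -/
/-!
On `f₂ = 0` one has `x₂y₂ = x₁y₁`, hence `h₂ = x₁y₁(x₁ + y₁ + x₂ + y₂)`; so `V(f₂, h₂)` is the
union of the four coordinate planes `x₁y₁ = x₂y₂ = 0` and the two planes `{x₂, y₂} = {x₁, y₁}`,
and every point of it lies on a plane contained in it. The point `1 = (1, 1, 1, 1)` lies on
`V(g₂, h₂)`, but on no plane contained in it: `g₂(1 + w) = g₂(w) + x₁ + y₁ + x₂ + y₂`, and with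
`g₂(w) = h₂(w) = 0` this forces `w` onto the line through `1`. A linear bijection would carry
a plane through the preimage of `1` to such a plane.
-/

open Submodule

section LinearAlgebra

variable {K V : Type*} [Field K] [AddCommGroup V] [Module K V]

theorem LinearIndependent.notMem_span_singleton_or_notMem_span_singleton {b₁ b₂ : V}
    (hb : LinearIndependent K ![b₁, b₂]) (u : V) : b₁ ∉ K ∙ u ∨ b₂ ∉ K ∙ u := by
  by_contra! h
  obtain ⟨⟨a, rfl⟩, ⟨c, rfl⟩⟩ := And.imp mem_span_singleton.1 mem_span_singleton.1 h
  have hc : c = 0 ∧ -a = 0 := LinearIndependent.pair_iff.1 hb c (-a) (by module)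
  exact hb.ne_zero 0 (by simp [neg_eq_zero.1 hc.2])

theorem exists_notMem_span_singleton_of_span_pair_subset {S : Set V} {u b₁ b₂ : V}
    (hb : LinearIndependent K ![b₁, b₂]) (hu : u ∈ span K {b₁, b₂})
    (hS : (span K {b₁, b₂} : Set V) ⊆ S) : ∃ w ∈ S, u + w ∈ S ∧ w ∉ K ∙ u := by
  have hb₁ : b₁ ∈ span K {b₁, b₂} := subset_span (by simp)
  have hb₂ : b₂ ∈ span K {b₁, b₂} := subset_span (by simp)
  rcases hb.notMem_span_singleton_or_notMem_span_singleton u with h | h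
  · exact ⟨b₁, hS hb₁, hS (add_mem hu hb₁), h⟩
  · exact ⟨b₂, hS hb₂, hS (add_mem hu hb₂), h⟩

end LinearAlgebra

theorem linearIndependent_pair_of_apply {R ι : Type*} [Ring R] {b₁ b₂ : ι → R} {i j : ι}
    (h₁i : b₁ i = 1) (h₁j : b₁ j = 0) (h₂i : b₂ i = 0) (h₂j : b₂ j = 1) :
    LinearIndependent R ![b₁, b₂] := by
  refine LinearIndependent.pair_iff.2 fun s t h => ⟨?_, ?_⟩
  · simpa [h₁i, h₂i] using congr_fun h i
  · simpa [h₁j, h₂j] using congr_fun h j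

namespace KeyProblem

variable {F : Type*}

section Definitions

variable [CommRing F]

def f₂ (v : Fin 4 → F) : F := v 0 * v 1 + v 2 * v 3

def g₂ (v : Fin 4 → F) : F := (v 0) ^ 2 + (v 1) ^ 2 + v 0 * v 1 + v 2 * v 3

def h₂ (v : Fin 4 → F) : F :=
  (v 0) ^ 2 * v 1 + v 0 * (v 1) ^ 2 + (v 2) ^ 2 * v 3 + v 2 * (v 3) ^ 2

def V (P Q : (Fin 4 → F) → F) : Set (Fin 4 → F) := {v | P v = 0 ∧ Q v = 0}

end Definitions

variable [Field F] [CharP F 2]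

theorem one_mem_V_g₂_h₂ : (1 : Fin 4 → F) ∈ V g₂ h₂ := by
  constructor <;> simp [g₂, h₂, CharTwo.add_self_eq_zero]

theorem mem_span_one_of_mem_V_g₂_h₂ {w : Fin 4 → F} (hw : w ∈ V g₂ h₂)
    (h1w : 1 + w ∈ V g₂ h₂) : w ∈ F ∙ (1 : Fin 4 → F) := by
  obtain ⟨hg, hh⟩ := hw
  have hg1 : g₂ (1 + w) = 0 := h1w.1
  simp only [g₂, h₂, Pi.add_apply, Pi.one_apply] at hg hh hg1
  have h3 : w 3 = w 0 + w 1 + w 2 := by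
    linear_combination (norm := (ring_nf; simp [CharTwo.ofNat_eq_mod])) hg1 - hg
  rw [h3] at hg hh
  have h1 : w 1 = w 0 := by
    have : (w 0 + w 1) ^ 3 = 0 := by
      linear_combination (norm := (ring_nf; simp [CharTwo.ofNat_eq_mod])) hh - (w 0 + w 1) * hg
    exact (CharTwo.add_eq_zero.1 (pow_eq_zero_iff three_ne_zero |>.1 this)).symm
  have h2 : w 2 = w 0 := by
    have : (w 0 + w 2) ^ 2 = 0 := by
      rw [h1] at hg
      linear_combination (norm := (ring_nf; simp [CharTwo.ofNat_eq_mod])) hg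
    exact (CharTwo.add_eq_zero.1 (pow_eq_zero_iff two_ne_zero |>.1 this)).symm
  refine mem_span_singleton.2 ⟨w 0, funext fun k => ?_⟩
  fin_cases k <;> simp [h1, h2, h3, CharTwo.add_self_eq_zero]

theorem coord_cases_of_mem_V_f₂_h₂ {u : Fin 4 → F} (hu : u ∈ V f₂ h₂) :
    (u 0 = 0 ∧ u 2 = 0) ∨ (u 0 = 0 ∧ u 3 = 0) ∨ (u 1 = 0 ∧ u 2 = 0) ∨ (u 1 = 0 ∧ u 3 = 0) ∨
      (u 2 = u 0 ∧ u 3 = u 1) ∨ (u 2 = u 1 ∧ u 3 = u 0) := by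
  obtain ⟨hf, hh⟩ := hu
  simp only [f₂, h₂] at hf hh
  have h23 : u 2 * u 3 = u 0 * u 1 := (CharTwo.add_eq_zero.1 hf).symm
  have hh' : u 0 * u 1 * (u 0 + u 1 + u 2 + u 3) = 0 := by
    linear_combination hh - (u 2 + u 3) * h23
  rcases mul_eq_zero.1 hh' with h01 | hsum
  · rw [h01] at h23
    rcases mul_eq_zero.1 h01 with h0 | h1 <;> rcases mul_eq_zero.1 h23 with h2 | h3 <;> tauto
  · have h3 : u 3 = u 0 + u 1 + u 2 := by
      linear_combination (norm := (ring_nf; simp [CharTwo.ofNat_eq_mod])) hsum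
    have : (u 2 + u 0) * (u 2 + u 1) = 0 := by
      rw [h3] at h23
      linear_combination (norm := (ring_nf; simp [CharTwo.ofNat_eq_mod])) h23
    rcases mul_eq_zero.1 this with h | h <;> rw [CharTwo.add_eq_zero] at h <;> rw [h] at h3
    · rw [add_right_comm, CharTwo.add_self_eq_zero, zero_add] at h3; tauto
    · rw [add_assoc, CharTwo.add_self_eq_zero, add_zero] at h3; tauto

theorem exists_notMem_span_singleton_of_mem_V_f₂_h₂ {u : Fin 4 → F} (hu : u ∈ V f₂ h₂) :
    ∃ w ∈ V f₂ h₂, u + w ∈ V f₂ h₂ ∧ w ∉ F ∙ u := by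
  have plane : ∀ (b₁ b₂ : Fin 4 → F) (i j : Fin 4), b₁ i = 1 → b₁ j = 0 → b₂ i = 0 → b₂ j = 1 →
      u i • b₁ + u j • b₂ = u → (∀ s t : F, s • b₁ + t • b₂ ∈ V f₂ h₂) →
      ∃ w ∈ V f₂ h₂, u + w ∈ V f₂ h₂ ∧ w ∉ F ∙ u := by
    intro b₁ b₂ i j h₁i h₁j h₂i h₂j hu hP
    refine exists_notMem_span_singleton_of_span_pair_subset
      (linearIndependent_pair_of_apply h₁i h₁j h₂i h₂j) (mem_span_pair.2 ⟨_, _, hu⟩) ?_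
    rintro _ hx
    obtain ⟨s, t, rfl⟩ := mem_span_pair.1 hx
    exact hP s t
  rcases coord_cases_of_mem_V_f₂_h₂ hu with
    ⟨h0, h2⟩ | ⟨h0, h3⟩ | ⟨h1, h2⟩ | ⟨h1, h3⟩ | ⟨h2, h3⟩ | ⟨h2, h3⟩
  · refine plane ![0, 1, 0, 0] ![0, 0, 0, 1] 1 3 rfl rfl rfl rfl ?_ fun s t => ?_
    · ext k; fin_cases k <;> simp [h0, h2]
    · constructor <;> simp [f₂, h₂]
  · refine plane ![0, 1, 0, 0] ![0, 0, 1, 0] 1 2 rfl rfl rfl rfl ?_ fun s t => ?_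
    · ext k; fin_cases k <;> simp [h0, h3]
    · constructor <;> simp [f₂, h₂]
  · refine plane ![1, 0, 0, 0] ![0, 0, 0, 1] 0 3 rfl rfl rfl rfl ?_ fun s t => ?_
    · ext k; fin_cases k <;> simp [h1, h2]
    · constructor <;> simp [f₂, h₂]
  · refine plane ![1, 0, 0, 0] ![0, 0, 1, 0] 0 2 rfl rfl rfl rfl ?_ fun s t => ?_
    · ext k; fin_cases k <;> simp [h1, h3]
    · constructor <;> simp [f₂, h₂]
  · refine plane ![1, 0, 1, 0] ![0, 1, 0, 1] 0 1 rfl rfl rfl rfl ?_ fun s t => ?_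
    · ext k; fin_cases k <;> simp [h2, h3]
    · constructor <;> simp [f₂, h₂] <;> ring_nf <;> simp [CharTwo.ofNat_eq_mod]
  · refine plane ![1, 0, 0, 1] ![0, 1, 1, 0] 0 1 rfl rfl rfl rfl ?_ fun s t => ?_
    · ext k; fin_cases k <;> simp [h2, h3]
    · constructor <;> simp [f₂, h₂] <;> ring_nf <;> simp [CharTwo.ofNat_eq_mod]

end KeyProblem

open KeyProblem in
theorem stmt_10_general (F : Type*) [Field F] [CharP F 2] :
    ¬ ∃ l : (Fin 4 → F) →ₗ[F] (Fin 4 → F), Function.Bijective l ∧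
      l '' {v : Fin 4 → F | v 0 * v 1 + v 2 * v 3 = 0 ∧
            (v 0) ^ 2 * v 1 + v 0 * (v 1) ^ 2 + (v 2) ^ 2 * v 3 + v 2 * (v 3) ^ 2 = 0}
        = {v : Fin 4 → F | (v 0) ^ 2 + (v 1) ^ 2 + v 0 * v 1 + v 2 * v 3 = 0 ∧
            (v 0) ^ 2 * v 1 + v 0 * (v 1) ^ 2 + (v 2) ^ 2 * v 3 + v 2 * (v 3) ^ 2 = 0} := by
  rintro ⟨l, hl, himg⟩
  change l '' V f₂ h₂ = V g₂ h₂ at himg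
  obtain ⟨u, hu, hlu⟩ : (1 : Fin 4 → F) ∈ l '' V f₂ h₂ := himg ▸ one_mem_V_g₂_h₂
  obtain ⟨w, hw, huw, hwu⟩ := exists_notMem_span_singleton_of_mem_V_f₂_h₂ hu
  have hlw : l w ∈ F ∙ l u := by
    rw [hlu]
    refine mem_span_one_of_mem_V_g₂_h₂ ?_ ?_ <;> rw [← himg]
    · exact Set.mem_image_of_mem l hw
    · rw [← hlu, ← map_add]
      exact Set.mem_image_of_mem l huw
  obtain ⟨c, hc⟩ := mem_span_singleton.1 hlw
  exact hwu (mem_span_singleton.2 ⟨c, hl.1 (by rw [map_smul, hc])⟩)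

/-- **Case `r = 2` of the key problem over finite fields**: over a finite field `F` of
characteristic 2, no bijective `F`-linear map of `F⁴` takes `V(f₂, h₂)` onto
`V(g₂, h₂)`, where, with coordinates `(x₁, y₁, x₂, y₂) = (v 0, v 1, v 2, v 3)`,
`f₂ = x₁y₁ + x₂y₂`, `g₂ = x₁² + y₁² + x₁y₁ + x₂y₂`,
`h₂ = x₁²y₁ + x₁y₁² + x₂²y₂ + x₂y₂²`. -/
theorem stmt_10 (F : Type*) [Field F] [Fintype F] [CharP F 2] :
    ¬ ∃ l : (Fin 4 → F) →ₗ[F] (Fin 4 → F), Function.Bijective l ∧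
      l '' {v : Fin 4 → F | v 0 * v 1 + v 2 * v 3 = 0 ∧
            (v 0) ^ 2 * v 1 + v 0 * (v 1) ^ 2 + (v 2) ^ 2 * v 3 + v 2 * (v 3) ^ 2 = 0}
        = {v : Fin 4 → F | (v 0) ^ 2 + (v 1) ^ 2 + v 0 * v 1 + v 2 * v 3 = 0 ∧
            (v 0) ^ 2 * v 1 + v 0 * (v 1) ^ 2 + (v 2) ^ 2 * v 3 + v 2 * (v 3) ^ 2 = 0} :=
  stmt_10_general F
end

section
/- Let F be a finite field of characteristic 2 with q elements. Then the number of tuples (x₁,y₁,x₂,y₂) ∈ F⁴ satisfying x₁y₁ + x₂y₂ = 0 and x₁²y₁ + x₁y₁² + x₂²y₂ + x₂y₂² = 0 equals 6q² − 9q + 4. -/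
/-!
In characteristic 2, `f₂ = 0` says `x₂y₂ = x₁y₁ =: c`, and then
`h₂ = x₁y₁(x₁ + y₁) + x₂y₂(x₂ + y₂) = c (x₁ + y₁ + x₂ + y₂)`.
So either `c = 0`, giving `(2q - 1)²` points, or `c ≠ 0` and `(x₂, y₂)` has the same sum and
product as `(x₁, y₁)`, i.e. it is `(x₁, y₁)` or `(y₁, x₁)`. This gives `2(q - 1)² - (q - 1)` more
points, the diagonal `x₁ = y₁` being counted once.
-/

open Finset

theorem Prod.eq_or_eq_swap_of_add_eq_of_mul_eq {R : Type*} [CommRing R] [NoZeroDivisors R]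
    {p r : R × R} (hs : r.1 + r.2 = p.1 + p.2) (hm : r.1 * r.2 = p.1 * p.2) :
    r = p ∨ r = p.swap := by
  have : (r.1 - p.1) * (r.1 - p.2) = 0 := by linear_combination r.1 * hs - hm
  rcases mul_eq_zero.1 this with h | h
  · exact .inl (Prod.ext (by linear_combination h) (by linear_combination hs - h))
  · exact .inr (Prod.ext (by simpa [sub_eq_zero] using h)
      (by simp only [Prod.snd_swap]; linear_combination hs - h))

section CharTwo

variable {R : Type*} [CommRing R]

def f₂ (p r : R × R) : R := p.1 * p.2 + r.1 * r.2

def h₂ (p r : R × R) : R := p.1 ^ 2 * p.2 + p.1 * p.2 ^ 2 + r.1 ^ 2 * r.2 + r.1 * r.2 ^ 2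

theorem f₂_eq_zero_and_h₂_eq_zero_iff [NoZeroDivisors R] [CharP R 2] (p r : R × R) :
    f₂ p r = 0 ∧ h₂ p r = 0 ↔
      p.1 * p.2 = 0 ∧ r.1 * r.2 = 0 ∨ p.1 * p.2 ≠ 0 ∧ (r = p ∨ r = p.swap) := by
  have h2 : (2 : R) = 0 := CharTwo.two_eq_zero
  have hh : h₂ p r = p.1 * p.2 * (p.1 + p.2) + r.1 * r.2 * (r.1 + r.2) := by unfold h₂; ring
  rw [f₂, CharTwo.add_eq_zero, hh]
  constructor
  · rintro ⟨hm, hh⟩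
    by_cases h0 : p.1 * p.2 = 0
    · exact .inl ⟨h0, hm ▸ h0⟩
    · have : p.1 * p.2 * ((p.1 + p.2) + (r.1 + r.2)) = 0 := by
        linear_combination hh + (r.1 + r.2) * hm
      have hs := CharTwo.add_eq_zero.1 ((mul_eq_zero.1 this).resolve_left h0)
      exact .inr ⟨h0, Prod.eq_or_eq_swap_of_add_eq_of_mul_eq hs.symm hm.symm⟩
  · rintro (⟨hp, hr⟩ | ⟨-, rfl | rfl⟩)
    · exact ⟨hp.trans hr.symm, by rw [hp, hr]; ring⟩
    · exact ⟨rfl, by linear_combination (r.1 * r.2 * (r.1 + r.2)) * h2⟩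
    · refine ⟨mul_comm _ _, ?_⟩
      simp only [Prod.fst_swap, Prod.snd_swap]
      linear_combination (p.1 * p.2 * (p.1 + p.2)) * h2

end CharTwo

theorem Finset.card_filter_eq_or_eq_swap {α : Type*} [Fintype α] [DecidableEq α] (s : Finset α) :
    #{x : (α × α) × (α × α) | x.1 ∈ s ×ˢ s ∧ (x.2 = x.1 ∨ x.2 = x.1.swap)} =
      #s * #s + (#s * #s - #s) := by
  have : ({x : (α × α) × (α × α) | x.1 ∈ s ×ˢ s ∧ (x.2 = x.1 ∨ x.2 = x.1.swap)} : Finset _) =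
      (s ×ˢ s).diag ∪ s.offDiag.image fun p => (p, p.swap) := by
    ext ⟨⟨a, b⟩, r⟩
    by_cases hab : a = b <;> simp [hab] <;> tauto
  rw [this, card_union_of_disjoint, diag_card, card_product,
    card_image_of_injective _ fun p q h => congrArg Prod.fst h, offDiag_card]
  simp only [disjoint_left, mem_diag, mem_image, mem_offDiag, not_exists, not_and]
  grind

theorem Finset.card_filter_ne_zero {M₀ : Type*} [Zero M₀] [Fintype M₀] [DecidableEq M₀] :
    #{a : M₀ | a ≠ 0} = Fintype.card M₀ - 1 := by
  rw [filter_ne', card_erase_of_mem (mem_univ _), card_univ]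

section Count

variable {M₀ : Type*} [MulZeroClass M₀] [NoZeroDivisors M₀] [Fintype M₀] [DecidableEq M₀]

theorem Finset.filter_mul_ne_zero :
    ({p : M₀ × M₀ | p.1 * p.2 ≠ 0} : Finset _) =
      ({a | a ≠ 0} : Finset M₀) ×ˢ ({a | a ≠ 0} : Finset M₀) := by
  ext
  simp

theorem Finset.card_filter_mul_eq_zero :
    #{p : M₀ × M₀ | p.1 * p.2 = 0} = 2 * Fintype.card M₀ - 1 := by
  have h := card_filter_add_card_filter_not (s := univ) fun p : M₀ × M₀ => p.1 * p.2 = 0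
  rw [filter_mul_ne_zero, card_product, card_filter_ne_zero, card_univ, Fintype.card_prod] at h
  obtain ⟨m, hm⟩ : ∃ m, Fintype.card M₀ = m + 1 := Nat.exists_eq_add_one.2 Fintype.card_pos
  rw [hm] at h ⊢
  simp only [add_tsub_cancel_right] at h
  rw [show 2 * (m + 1) - 1 = 2 * m + 1 by omega]
  nlinarith

theorem Finset.card_filter_mul_eq_zero_and_mul_eq_zero_or_eq_or_eq_swap [Nontrivial M₀] :
    #{x : (M₀ × M₀) × (M₀ × M₀) | x.1.1 * x.1.2 = 0 ∧ x.2.1 * x.2.2 = 0 ∨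
        x.1.1 * x.1.2 ≠ 0 ∧ (x.2 = x.1 ∨ x.2 = x.1.swap)} =
      6 * Fintype.card M₀ ^ 2 - 9 * Fintype.card M₀ + 4 := by
  have hq : 2 ≤ Fintype.card M₀ := Fintype.one_lt_card
  rw [filter_or, card_union_of_disjoint (disjoint_filter.2 fun x _ h h' => h'.1 h.1)]
  have hdeg : ({x : (M₀ × M₀) × (M₀ × M₀) | x.1.1 * x.1.2 = 0 ∧ x.2.1 * x.2.2 = 0} : Finset _) =
      ({p | p.1 * p.2 = 0} : Finset (M₀ × M₀)) ×ˢ ({p | p.1 * p.2 = 0} : Finset (M₀ × M₀)) := by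
    ext
    simp
  rw [hdeg, card_product, card_filter_mul_eq_zero,
    filter_congr (q := fun x => x.1 ∈ ({a | a ≠ 0} : Finset M₀) ×ˢ ({a | a ≠ 0} : Finset M₀) ∧
      (x.2 = x.1 ∨ x.2 = x.1.swap)) (fun x _ => by simp),
    card_filter_eq_or_eq_swap, card_filter_ne_zero]
  zify [hq, show 1 ≤ 2 * Fintype.card M₀ by omega, show 1 ≤ Fintype.card M₀ by omega,
    show Fintype.card M₀ - 1 ≤ (Fintype.card M₀ - 1) * (Fintype.card M₀ - 1) from
      Nat.le_mul_self _, show 9 * Fintype.card M₀ ≤ 6 * Fintype.card M₀ ^ 2 by nlinarith]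
  ring

end Count

theorem card_filter_f₂_eq_zero_and_h₂_eq_zero (F : Type*) [Field F] [Fintype F] [DecidableEq F]
    [CharP F 2] :
    #{x : (F × F) × (F × F) | f₂ x.1 x.2 = 0 ∧ h₂ x.1 x.2 = 0} =
      6 * Fintype.card F ^ 2 - 9 * Fintype.card F + 4 := by
  simp_rw [f₂_eq_zero_and_h₂_eq_zero_iff]
  exact card_filter_mul_eq_zero_and_mul_eq_zero_or_eq_or_eq_swap

def Fin.fourArrowEquiv (α : Type*) : (Fin 4 → α) ≃ (α × α) × (α × α) where
  toFun v := ((v 0, v 1), (v 2, v 3))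
  invFun x := ![x.1.1, x.1.2, x.2.1, x.2.2]
  left_inv v := by ext i; fin_cases i <;> rfl
  right_inv _ := rfl

/-- **Cardinality of `V(f₂, h₂)`**: over a finite field `F` of characteristic 2 with
`q` elements, the number of `(x₁, y₁, x₂, y₂) ∈ F⁴` with `x₁y₁ + x₂y₂ = 0` and
`x₁²y₁ + x₁y₁² + x₂²y₂ + x₂y₂² = 0` equals `6q² - 9q + 4`. -/
theorem stmt_11 (F : Type*) [Field F] [Fintype F] [CharP F 2] :
    Nat.card {v : Fin 4 → F // v 0 * v 1 + v 2 * v 3 = 0 ∧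
        (v 0) ^ 2 * v 1 + v 0 * (v 1) ^ 2 + (v 2) ^ 2 * v 3 + v 2 * (v 3) ^ 2 = 0}
      = 6 * (Fintype.card F) ^ 2 - 9 * Fintype.card F + 4 := by
  classical
  refine (Nat.card_congr ((Fin.fourArrowEquiv F).subtypeEquiv
    (q := fun x => f₂ x.1 x.2 = 0 ∧ h₂ x.1 x.2 = 0) fun _ => Iff.rfl)).trans ?_
  rw [Nat.card_eq_fintype_card, Fintype.card_subtype, card_filter_f₂_eq_zero_and_h₂_eq_zero]
end

section
/- Let F be a finite field of characteristic 2 with q elements. Then the number of tuples (x₁,y₁,x₂,y₂) ∈ F⁴ satisfying x₁²y₁ + x₁y₁² + x₂²y₂ + x₂y₂² = 0 and x₁² + y₁² + x₁y₁ + x₂y₂ = 0 is at most 2q² + 2q − 3. -/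
/-!
Fibre the variety over `(x₁, y₁) = (a, b)`. In characteristic 2 the fibre is the set of
`(x, y)` with `xy = a² + ab + b²` and `xy(x + y) = ab(a + b)`. Over `(0, 0)` this is `xy = 0`,
which has `2q - 1` points. Over any other point `a² + ab + b²` and `ab(a + b)` do not both
vanish; so if the fibre is nonempty then `xy ≠ 0`, the sum `x + y` is determined, and `x` is a
root of a fixed quadratic. Hence the count is at most `(2q - 1) + 2(q² - 1)`.
-/

open Finset Polynomial

theorem card_setOf_mul_eq_zero {M₀ : Type*} [MulZeroClass M₀] [NoZeroDivisors M₀]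
    [Fintype M₀] :
    Nat.card {b : M₀ × M₀ | b.1 * b.2 = 0} = 2 * Fintype.card M₀ - 1 := by
  classical
  have hunion :
      {b : M₀ × M₀ | b.1 * b.2 = 0} = ↑({0} ×ˢ univ ∪ univ ×ˢ {0} : Finset (M₀ × M₀)) := by
    ext ⟨x, y⟩; simp [mul_eq_zero, eq_comm]
  have hinter : ({0} ×ˢ univ ∩ univ ×ˢ {0} : Finset (M₀ × M₀)) = {(0, 0)} := by
    ext ⟨x, y⟩; simp [eq_comm]
  have := card_union_add_card_inter ({0} ×ˢ univ : Finset (M₀ × M₀)) (univ ×ˢ {0})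
  rw [hinter] at this
  simp only [card_product, card_singleton, card_univ] at this
  rw [hunion, Nat.card_coe_set_eq, Set.ncard_coe_finset]
  omega

section

variable {R : Type*} [CommRing R]

theorem card_setOf_add_eq_and_mul_eq_le_two [IsDomain R] (s p : R) :
    Nat.card {b : R × R | b.1 + b.2 = s ∧ b.1 * b.2 = p} ≤ 2 := by
  classical
  set Q : R[X] := C 1 * X ^ 2 + C (-s) * X + C p
  have hdeg : Q.natDegree = 2 := natDegree_quadratic one_ne_zero
  have hQ : Q ≠ 0 := ne_zero_of_natDegree_gt (n := 0) (by omega)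
  have root : ∀ b ∈ {b : R × R | b.1 + b.2 = s ∧ b.1 * b.2 = p}, b.1 ∈ Q.rootSet R := by
    rintro ⟨x, y⟩ ⟨rfl, rfl⟩
    rw [mem_rootSet_of_ne hQ]
    simp only [Q, map_add, map_mul, aeval_C, aeval_X, map_pow, Algebra.algebraMap_self,
      RingHom.id_apply]
    ring
  have inj : Function.Injective fun b : {b : R × R | b.1 + b.2 = s ∧ b.1 * b.2 = p} =>
      (⟨b.1.1, root b.1 b.2⟩ : Q.rootSet R) := by
    rintro ⟨⟨x, y⟩, hxy, _⟩ ⟨⟨x', y'⟩, hxy', _⟩ hxx'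
    obtain rfl : x = x' := congrArg Subtype.val hxx'
    ext
    · rfl
    · linear_combination hxy - hxy'
  calc _ ≤ Nat.card (Q.rootSet R) := Nat.card_le_card_of_injective _ inj
    _ ≤ Q.natDegree := by rw [Nat.card_coe_set_eq]; exact ncard_rootSet_le Q R
    _ = 2 := hdeg

theorem eq_zero_of_sq_add_mul_add_sq_eq_zero [NoZeroDivisors R] {a b : R}
    (hN : a ^ 2 + a * b + b ^ 2 = 0) (hM : a * b * (a + b) = 0) : a = 0 ∧ b = 0 := by
  rcases mul_eq_zero.1 hM with hab | hab
  · rcases mul_eq_zero.1 hab with rfl | rfl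
    · simpa using hN
    · simpa using hN
  · obtain rfl : b = -a := eq_neg_of_add_eq_zero_right hab
    have : a ^ 2 = 0 := by linear_combination hN
    simp_all

def fiberOver (a : R × R) : Set (R × R) :=
  {b | b.1 * b.2 = a.1 ^ 2 + a.1 * a.2 + a.2 ^ 2 ∧
    b.1 * b.2 * (b.1 + b.2) = a.1 * a.2 * (a.1 + a.2)}

theorem mem_fiberOver_iff [CharP R 2] (a b x y : R) :
    (x, y) ∈ fiberOver (a, b) ↔
      a ^ 2 * b + a * b ^ 2 + x ^ 2 * y + x * y ^ 2 = 0 ∧ a ^ 2 + b ^ 2 + a * b + x * y = 0 := by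
  have h₁ : a ^ 2 * b + a * b ^ 2 + x ^ 2 * y + x * y ^ 2 =
      x * y * (x + y) + a * b * (a + b) := by ring
  have h₂ : a ^ 2 + b ^ 2 + a * b + x * y = x * y + (a ^ 2 + a * b + b ^ 2) := by ring
  rw [h₁, h₂, CharTwo.add_eq_zero, CharTwo.add_eq_zero, and_comm]
  rfl

theorem card_fiberOver_zero [NoZeroDivisors R] [Fintype R] :
    Nat.card (fiberOver (0 : R × R)) = 2 * Fintype.card R - 1 := by
  rw [← card_setOf_mul_eq_zero]
  congr! 2
  ext b
  simp +contextual [fiberOver]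

end

theorem card_fiberOver_le_two {F : Type*} [Field F] [Finite F] {a : F × F} (ha : a ≠ 0) :
    Nat.card (fiberOver a) ≤ 2 := by
  rcases (fiberOver a).eq_empty_or_nonempty with h | ⟨b, hb₁, hb₂⟩
  · simp [h]
  have hd : a.1 ^ 2 + a.1 * a.2 + a.2 ^ 2 ≠ 0 := fun hd => by
    rw [hb₁, hd, zero_mul, eq_comm] at hb₂
    exact ha (Prod.ext_iff.2 (eq_zero_of_sq_add_mul_add_sq_eq_zero hd hb₂))
  have hsub : fiberOver a ⊆ {b | b.1 + b.2 =
      a.1 * a.2 * (a.1 + a.2) / (a.1 ^ 2 + a.1 * a.2 + a.2 ^ 2) ∧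
      b.1 * b.2 = a.1 ^ 2 + a.1 * a.2 + a.2 ^ 2} := by
    rintro b ⟨h₁, h₂⟩
    refine ⟨?_, h₁⟩
    rw [eq_div_iff hd, ← h₁, ← h₂]
    ring
  exact (Nat.card_mono (Set.toFinite _) hsub).trans (card_setOf_add_eq_and_mul_eq_le_two _ _)

/-- **Upper bound for the cardinality of `V(g₂, h₂)`**: over a finite field `F` of
characteristic 2 with `q` elements, the number of `(x₁, y₁, x₂, y₂) ∈ F⁴` with
`x₁²y₁ + x₁y₁² + x₂²y₂ + x₂y₂² = 0` and `x₁² + y₁² + x₁y₁ + x₂y₂ = 0` is at most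
`2q² + 2q - 3`. -/
theorem stmt_12 (F : Type*) [Field F] [Fintype F] [CharP F 2] :
    Nat.card {v : Fin 4 → F //
        (v 0) ^ 2 * v 1 + v 0 * (v 1) ^ 2 + (v 2) ^ 2 * v 3 + v 2 * (v 3) ^ 2 = 0 ∧
        (v 0) ^ 2 + (v 1) ^ 2 + v 0 * v 1 + v 2 * v 3 = 0}
      ≤ 2 * (Fintype.card F) ^ 2 + 2 * Fintype.card F - 3 := by
  classical
  have hq : 2 ≤ Fintype.card F := Fintype.one_lt_card
  let e : (Fin 4 → F) ≃ (F × F) × (F × F) :=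
    { toFun v := ((v 0, v 1), (v 2, v 3))
      invFun c := ![c.1.1, c.1.2, c.2.1, c.2.2]
      left_inv v := by ext i; fin_cases i <;> rfl
      right_inv _ := rfl }
  calc _ = Nat.card {c : (F × F) × (F × F) // c.2 ∈ fiberOver c.1} :=
        Nat.card_congr (e.subtypeEquiv fun v => (mem_fiberOver_iff ..).symm)
    _ = ∑ a : F × F, Nat.card (fiberOver a) := by
        rw [Nat.card_congr (Equiv.subtypeProdEquivSigmaSubtype fun a b => b ∈ fiberOver a),
          Nat.card_sigma]
    _ ≤ ∑ a : F × F, (2 + if a = 0 then 2 * Fintype.card F - 3 else 0) := by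
        refine sum_le_sum fun a _ => ?_
        split_ifs with ha
        · rw [ha, card_fiberOver_zero]
          omega
        · exact card_fiberOver_le_two ha
    _ = 2 * Fintype.card F ^ 2 + 2 * Fintype.card F - 3 := by
        simp only [sum_add_distrib, sum_const, sum_ite_eq', mem_univ, if_true, card_univ,
          Fintype.card_prod, smul_eq_mul, ← sq]
        omega
end

section
/- Let F be a finite field of characteristic 2 with q elements. Then the number of tuples (x₁,y₁,x₂,y₂) ∈ F⁴ satisfying x₁y₁ + x₂y₂ = 0 and x₁²y₁ + x₁y₁² + x₂²y₂ + x₂y₂² = 0 is strictly greater than the number of tuples satisfying x₁²y₁ + x₁y₁² + x₂²y₂ + x₂y₂² = 0 and x₁² + y₁² + x₁y₁ + x₂y₂ = 0. -/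
/-!
Write `a = (x₁, y₁)`, `b = (x₂, y₂)` and `N(x, y) = xy`, `H(x, y) = x²y + xy² = xy(x + y)`,
`Q(x, y) = x² + y² + xy`. In characteristic 2 the first set is `{N b = N a, H b = H a}` and
the second is `{N b = Q a, H b = H a}`, so both are counted as `∑ₐ` of fibre sizes of
`b ↦ (N b, H b)`. The fibre over `(0, 0)` is the union of the two axes (`2q - 1` points); every
other fibre has at most two points, since `x₂, y₂` are the roots of `T² - (h / n) T + n`.
For the first set the `2q - 1` points `a` on the axes each see the big fibre and every other `a`
sees at least itself, giving `≥ (2q - 1)² + q² - (2q - 1)`. For the second, `(Q a, H a) = (0, 0)`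
only at `a = 0`, giving `≤ (2q - 1) + 2 (q² - 1)`.
-/

open Finset Polynomial

lemma eq_zero_of_sq_add_sq_add_mul_eq_zero {F : Type*} [Field F] {x y : F}
    (hQ : x ^ 2 + y ^ 2 + x * y = 0) (hH : x ^ 2 * y + x * y ^ 2 = 0) : (x, y) = 0 := by
  have : x * y * (x + y) = 0 := by linear_combination hH
  rcases mul_eq_zero.mp this with hxy | hs
  · rcases mul_eq_zero.mp hxy with hx | hy
    · subst hx; simp_all
    · subst hy; simp_all
  · have hy : y = -x := by linear_combination hs
    subst hy
    have : x ^ 2 = 0 := by linear_combination hQ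
    simp_all

lemma add_add_add_eq_zero_iff {R : Type*} [Ring R] [CharP R 2] {a b c d : R} :
    a + b + c + d = 0 ↔ c + d = a + b := by
  rw [add_assoc, CharTwo.add_eq_zero, eq_comm]

section ProdFiber

variable {F : Type*} [Field F] [Fintype F] [DecidableEq F]

def prodFiber (n h : F) : Finset (F × F) :=
  {b : F × F | b.1 * b.2 = n ∧ b.1 ^ 2 * b.2 + b.1 * b.2 ^ 2 = h}

lemma self_mem_prodFiber (a : F × F) :
    a ∈ prodFiber (a.1 * a.2) (a.1 ^ 2 * a.2 + a.1 * a.2 ^ 2) := by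
  simp [prodFiber]

variable (F) in
def axes : Finset (F × F) := {b | b.1 * b.2 = 0}

lemma prodFiber_zero_zero : prodFiber (0 : F) 0 = axes F := by
  ext b
  simp only [prodFiber, axes, mem_filter, mem_univ, true_and, and_iff_left_iff_imp]
  intro h
  linear_combination (b.1 + b.2) * h

lemma prodFiber_zero_of_ne_zero {h : F} (hh : h ≠ 0) : prodFiber 0 h = ∅ := by
  ext b
  simp only [prodFiber, mem_filter, mem_univ, true_and, notMem_empty, iff_false, not_and]
  intro hn hH
  exact hh (by linear_combination -hH + (b.1 + b.2) * hn)

lemma card_prodFiber_le_two_of_ne_zero {n : F} (hn : n ≠ 0) (h : F) :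
    #(prodFiber n h) ≤ 2 := by
  set p : F[X] := C 1 * X ^ 2 + C (-(h / n)) * X + C n
  have hp : p ≠ 0 :=
    ne_zero_of_natDegree_gt (n := 1) (by rw [natDegree_quadratic one_ne_zero]; omega)
  calc #(prodFiber n h) ≤ #p.roots.toFinset := by
        refine card_le_card_of_injOn Prod.fst (fun b hb => ?_) (fun b hb b' hb' hfst => ?_)
        · simp only [prodFiber, coe_filter, mem_univ, true_and, Set.mem_ofPred_eq] at hb
          obtain ⟨hN, hH⟩ := hb
          have hsum : b.1 + b.2 = h / n := by
            field_simp
            linear_combination hH - (b.1 + b.2) * hN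
          simp only [mem_coe, Multiset.mem_toFinset, mem_roots hp, IsRoot, p, eval_add, eval_mul,
            eval_C, eval_pow, eval_X]
          linear_combination b.1 * hsum - hN
        · simp only [prodFiber, coe_filter, mem_univ, true_and, Set.mem_ofPred_eq] at hb hb'
          have hb1 : b.1 ≠ 0 := by rintro h0; simp [h0, eq_comm, hn] at hb
          exact Prod.ext hfst (mul_left_cancel₀ hb1 (hb.1.trans (hfst ▸ hb'.1.symm)))
    _ ≤ p.natDegree := (Multiset.toFinset_card_le _).trans (card_roots' p)
    _ = 2 := natDegree_quadratic one_ne_zero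

lemma card_prodFiber_le_two {n h : F} (hnh : (n, h) ≠ (0, 0)) : #(prodFiber n h) ≤ 2 := by
  by_cases hn : n = 0
  · subst hn
    rw [prodFiber_zero_of_ne_zero (by simpa using hnh)]
    simp
  · exact card_prodFiber_le_two_of_ne_zero hn h

lemma card_axes_add_one : #(axes F) + 1 = 2 * Fintype.card F := by
  have hunion : axes F = {0} ×ˢ univ ∪ univ ×ˢ {0} := by
    ext b
    simp only [axes, mem_filter, mem_univ, true_and, mul_eq_zero, mem_union, mem_product,
      mem_singleton, and_true]
  have hinter : ({0} ×ˢ univ ∩ univ ×ˢ {0} : Finset (F × F)) = {0} := by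
    ext b
    simp [Prod.ext_iff, eq_comm]
  have := card_union_add_card_inter ({0} ×ˢ univ : Finset (F × F)) (univ ×ˢ {0})
  rw [← hunion, hinter] at this
  simpa [two_mul] using this

lemma card_axes_sq_add_card_compl_le_sum_card_prodFiber :
    #(axes F) * #(axes F) + #(axes F)ᶜ ≤
      ∑ a : F × F, #(prodFiber (a.1 * a.2) (a.1 ^ 2 * a.2 + a.1 * a.2 ^ 2)) := by
  rw [← sum_add_sum_compl (axes F)]
  calc #(axes F) * #(axes F) + #(axes F)ᶜ
      = ∑ _a ∈ axes F, #(axes F) + ∑ _a ∈ (axes F)ᶜ, 1 := by simp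
    _ ≤ _ := by
      gcongr with a ha a
      · have hN : a.1 * a.2 = 0 := by simpa [axes] using ha
        have hH : a.1 ^ 2 * a.2 + a.1 * a.2 ^ 2 = 0 := by linear_combination (a.1 + a.2) * hN
        rw [hN, hH, prodFiber_zero_zero]
      · exact card_pos.mpr ⟨a, self_mem_prodFiber a⟩

lemma sum_card_prodFiber_le :
    ∑ a : F × F, #(prodFiber (a.1 ^ 2 + a.2 ^ 2 + a.1 * a.2) (a.1 ^ 2 * a.2 + a.1 * a.2 ^ 2)) ≤
      #(axes F) + 2 * (Fintype.card (F × F) - 1) := by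
  rw [← add_sum_erase univ _ (mem_univ 0)]
  gcongr
  · simp [prodFiber_zero_zero]
  · calc _ ≤ ∑ _a ∈ univ.erase (0 : F × F), 2 := by
          refine sum_le_sum fun a ha => card_prodFiber_le_two fun h => ?_
          simp only [Prod.mk.injEq] at h
          exact (mem_erase.mp ha).1 (eq_zero_of_sq_add_sq_add_mul_eq_zero h.1 h.2)
      _ = 2 * (Fintype.card (F × F) - 1) := by simp [card_erase_of_mem, mul_comm]

lemma mem_prodFiber_mul_iff [CharP F 2] {a b : F × F} :
    b ∈ prodFiber (a.1 * a.2) (a.1 ^ 2 * a.2 + a.1 * a.2 ^ 2) ↔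
      a.1 * a.2 + b.1 * b.2 = 0 ∧
        a.1 ^ 2 * a.2 + a.1 * a.2 ^ 2 + b.1 ^ 2 * b.2 + b.1 * b.2 ^ 2 = 0 := by
  simp only [prodFiber, mem_filter, mem_univ, true_and]
  rw [add_add_add_eq_zero_iff, CharTwo.add_eq_zero, eq_comm (a := a.1 * a.2)]

lemma mem_prodFiber_sq_add_sq_add_mul_iff [CharP F 2] {a b : F × F} :
    b ∈ prodFiber (a.1 ^ 2 + a.2 ^ 2 + a.1 * a.2) (a.1 ^ 2 * a.2 + a.1 * a.2 ^ 2) ↔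
      a.1 ^ 2 * a.2 + a.1 * a.2 ^ 2 + b.1 ^ 2 * b.2 + b.1 * b.2 ^ 2 = 0 ∧
        a.1 ^ 2 + a.2 ^ 2 + a.1 * a.2 + b.1 * b.2 = 0 := by
  simp only [prodFiber, mem_filter, mem_univ, true_and]
  rw [add_add_add_eq_zero_iff, CharTwo.add_eq_zero, eq_comm (a := a.1 ^ 2 + _ + _), and_comm]

end ProdFiber

lemma natCard_fin_four_eq_sum_card {α : Type*} [Fintype α] (s : α × α → Finset (α × α))
    {P : α × α → α × α → Prop} (hP : ∀ a b, b ∈ s a ↔ P a b) :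
    Nat.card {v : Fin 4 → α // P (v 0, v 1) (v 2, v 3)} = ∑ a, #(s a) := by
  classical
  let e : (Fin 4 → α) ≃ (α × α) × (α × α) :=
    { toFun := fun v => ((v 0, v 1), (v 2, v 3))
      invFun := fun p => ![p.1.1, p.1.2, p.2.1, p.2.2]
      left_inv := fun v => by ext i; fin_cases i <;> rfl
      right_inv := fun _ => rfl }
  refine (Nat.card_congr (e.subtypeEquiv (q := fun p => p.2 ∈ s p.1)
    fun v => (hP _ _).symm)).trans ?_
  rw [Nat.card_eq_fintype_card, Fintype.card_subtype, card_filter, Fintype.sum_prod_type]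
  simp

/-- **`|V(f₂, h₂)| > |V(g₂, h₂)|` over finite fields of characteristic 2.** -/
theorem stmt_13 (F : Type*) [Field F] [Fintype F] [CharP F 2] :
    Nat.card {v : Fin 4 → F // v 0 * v 1 + v 2 * v 3 = 0 ∧
        (v 0) ^ 2 * v 1 + v 0 * (v 1) ^ 2 + (v 2) ^ 2 * v 3 + v 2 * (v 3) ^ 2 = 0}
      > Nat.card {v : Fin 4 → F //
        (v 0) ^ 2 * v 1 + v 0 * (v 1) ^ 2 + (v 2) ^ 2 * v 3 + v 2 * (v 3) ^ 2 = 0 ∧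
        (v 0) ^ 2 + (v 1) ^ 2 + v 0 * v 1 + v 2 * v 3 = 0} := by
  classical
  rw [gt_iff_lt,
    natCard_fin_four_eq_sum_card _ fun a b => mem_prodFiber_mul_iff (a := a) (b := b),
    natCard_fin_four_eq_sum_card _ fun a b =>
      mem_prodFiber_sq_add_sq_add_mul_iff (a := a) (b := b)]
  have hq : 2 ≤ Fintype.card F := Fintype.one_lt_card
  have hq2 : 1 ≤ Fintype.card F * Fintype.card F := Nat.one_le_iff_ne_zero.mpr (by positivity)
  have hlow := card_axes_sq_add_card_compl_le_sum_card_prodFiber (F := F)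
  have hup := sum_card_prodFiber_le (F := F)
  have haxes := card_axes_add_one (F := F)
  have hcompl := card_add_card_compl (axes F)
  rw [Fintype.card_prod] at hup hcompl
  zify [hq2] at *
  -- with `q = #F` and `#axes = 2q - 1`, the two bounds differ by `(q - 1) (3q - 5) > 0`
  nlinarith
end

section
/- Let F be a finite field of characteristic 2 with q elements. Then the number of pairs (α,β) ∈ F² with α ≠ 0 and β ≠ 0 for which there exist x, y ∈ F with x²y + xy² = α and xy = β equals (q−1)(q−2)/2, which equals q(q−3)/2 + 1. -/
/-!
In characteristic 2, `ψ(x, y) = (xy(x + y), xy)` has both coordinates nonzero exactly when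
`x`, `y` are nonzero and distinct. On such pairs `ψ(x, y)` determines the product `xy` and then
the sum `x + y`, hence the pair `{x, y}` up to order. So `ψ` is exactly two-to-one from the
`(q - 1)(q - 2)` ordered pairs of distinct nonzero elements onto the set being counted.
-/

open Finset

theorem eq_and_eq_or_eq_and_eq_of_add_eq_add_of_mul_eq_mul {R : Type*} [CommRing R]
    [NoZeroDivisors R] {x y a b : R} (hs : x + y = a + b) (hp : x * y = a * b) :
    x = a ∧ y = b ∨ x = b ∧ y = a := by
  have hroot : (x - a) * (x - b) = 0 := by linear_combination x * hs - hp
  rcases mul_eq_zero.1 hroot with h | h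
  · obtain rfl := sub_eq_zero.1 h
    exact .inl ⟨rfl, add_left_cancel hs⟩
  · obtain rfl := sub_eq_zero.1 h
    exact .inr ⟨rfl, add_left_cancel (hs.trans (add_comm a x))⟩

theorem Finset.card_eq_mul_card_image_of_forall_card_fiber_eq {α β : Type*} [DecidableEq β]
    {f : α → β} (s : Finset α) (n : ℕ) (hn : ∀ b ∈ s.image f, #{a ∈ s | f a = b} = n) :
    #s = n * #(s.image f) :=
  le_antisymm (card_le_mul_card_image s n fun b hb ↦ (hn b hb).le)
    (mul_card_image_le_card s n fun b hb ↦ (hn b hb).ge)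

theorem Int.sub_one_mul_sub_two_ediv_two (q : ℤ) :
    (q - 1) * (q - 2) / 2 = q * (q - 3) / 2 + 1 := by
  rw [show (q - 1) * (q - 2) = q * (q - 3) + 1 * 2 by ring,
    Int.add_mul_ediv_right _ _ two_ne_zero]

namespace PsiMap

variable {F : Type*} [Field F]

def ψ (p : F × F) : F × F := (p.1 ^ 2 * p.2 + p.1 * p.2 ^ 2, p.1 * p.2)

theorem ψ_fst (p : F × F) : (ψ p).1 = p.1 * p.2 * (p.1 + p.2) := by
  simp only [ψ]; ring

theorem ψ_snd (p : F × F) : (ψ p).2 = p.1 * p.2 := rfl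

theorem ψ_eq_ψ_iff {p r : F × F} (hp : p.1 * p.2 ≠ 0) :
    ψ r = ψ p ↔ r = p ∨ r = p.swap := by
  obtain ⟨x, y⟩ := p
  constructor
  · obtain ⟨a, b⟩ := r
    intro h
    have hprod : a * b = x * y := congrArg Prod.snd h
    have hsum : a + b = x + y := by
      have h1 := congrArg Prod.fst h
      rw [ψ_fst, ψ_fst, hprod] at h1
      exact mul_left_cancel₀ hp h1
    simpa using eq_and_eq_or_eq_and_eq_of_add_eq_add_of_mul_eq_mul hsum hprod
  · rintro (rfl | rfl)
    · rfl
    · simp only [ψ, Prod.swap_prod_mk, Prod.mk.injEq]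
      constructor <;> ring

variable [Fintype F] [DecidableEq F]

variable (F) in
def nonzeroOffDiag : Finset (F × F) :=
  ({0}ᶜ : Finset F).offDiag

theorem mem_nonzeroOffDiag {p : F × F} :
    p ∈ nonzeroOffDiag F ↔ p.1 ≠ 0 ∧ p.2 ≠ 0 ∧ p.1 ≠ p.2 := by
  simp [nonzeroOffDiag]

theorem card_nonzeroOffDiag :
    (#(nonzeroOffDiag F) : ℤ) = (Fintype.card F - 1) * (Fintype.card F - 2) := by
  have hq : 1 ≤ Fintype.card F := Fintype.card_pos
  rw [nonzeroOffDiag, offDiag_card, card_compl, card_singleton,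
    Nat.cast_sub (Nat.le_mul_self _), Nat.cast_mul, Nat.cast_sub hq]
  ring

theorem card_nonzeroOffDiag_eq_two_mul :
    #(nonzeroOffDiag F) = 2 * #((nonzeroOffDiag F).image ψ) := by
  refine card_eq_mul_card_image_of_forall_card_fiber_eq _ 2 fun b hb ↦ ?_
  obtain ⟨p, hp, rfl⟩ := mem_image.1 hb
  obtain ⟨hx, hy, hxy⟩ := mem_nonzeroOffDiag.1 hp
  have hfiber : {r ∈ nonzeroOffDiag F | ψ r = ψ p} = {p, p.swap} := by
    ext r
    rw [mem_filter, ψ_eq_ψ_iff (mul_ne_zero hx hy), mem_insert, mem_singleton]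
    constructor
    · exact And.right
    · rintro (rfl | rfl)
      · exact ⟨hp, .inl rfl⟩
      · exact ⟨mem_nonzeroOffDiag.2 ⟨hy, hx, Ne.symm hxy⟩, .inr rfl⟩
  rw [hfiber, card_pair fun h ↦ hxy (congrArg Prod.fst h)]

variable [CharP F 2]

theorem ψ_fst_ne_zero_and_ψ_snd_ne_zero_iff {p : F × F} :
    (ψ p).1 ≠ 0 ∧ (ψ p).2 ≠ 0 ↔ p ∈ nonzeroOffDiag F := by
  simp only [ψ_fst, ψ_snd, mem_nonzeroOffDiag, ne_eq, mul_eq_zero, CharTwo.add_eq_zero]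
  tauto

theorem setOf_ψ_eq_image :
    {ab : F × F | ab.1 ≠ 0 ∧ ab.2 ≠ 0 ∧ ∃ x y : F, x ^ 2 * y + x * y ^ 2 = ab.1 ∧ x * y = ab.2}
      = ↑((nonzeroOffDiag F).image ψ) := by
  ext ab
  simp only [Set.mem_ofPred_eq, coe_image, Set.mem_image, mem_coe]
  constructor
  · rintro ⟨h1, h2, x, y, hx, hy⟩
    have hψ : ψ (x, y) = ab := Prod.ext hx hy
    exact ⟨(x, y), ψ_fst_ne_zero_and_ψ_snd_ne_zero_iff.1 (hψ ▸ ⟨h1, h2⟩), hψ⟩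
  · rintro ⟨p, hp, rfl⟩
    exact ⟨(ψ_fst_ne_zero_and_ψ_snd_ne_zero_iff.2 hp).1,
      (ψ_fst_ne_zero_and_ψ_snd_ne_zero_iff.2 hp).2, p.1, p.2, rfl, rfl⟩

end PsiMap

open PsiMap in
/-- **Cardinality of `A* = {(α, β) ∈ Im ψ : α ≠ 0, β ≠ 0}`** for
`ψ(x, y) = (x²y + xy², xy)` over a finite field `F` of characteristic 2 with `q`
elements: it equals `(q-1)(q-2)/2 = q(q-3)/2 + 1`. -/
theorem stmt_14 (F : Type*) [Field F] [Fintype F] [CharP F 2] :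
    (Nat.card {ab : F × F // ab.1 ≠ 0 ∧ ab.2 ≠ 0 ∧
        ∃ x y : F, x ^ 2 * y + x * y ^ 2 = ab.1 ∧ x * y = ab.2} : ℤ)
      = ((Fintype.card F : ℤ) - 1) * ((Fintype.card F : ℤ) - 2) / 2 ∧
    ((Fintype.card F : ℤ) - 1) * ((Fintype.card F : ℤ) - 2) / 2
      = (Fintype.card F : ℤ) * ((Fintype.card F : ℤ) - 3) / 2 + 1 := by
  classical
  refine ⟨?_, Int.sub_one_mul_sub_two_ediv_two _⟩
  have hcard : Nat.card {ab : F × F // ab.1 ≠ 0 ∧ ab.2 ≠ 0 ∧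
      ∃ x y : F, x ^ 2 * y + x * y ^ 2 = ab.1 ∧ x * y = ab.2} = #((nonzeroOffDiag F).image ψ) := by
    rw [← Set.coe_ofPred, setOf_ψ_eq_image, Nat.card_coe_set_eq, Set.ncard_coe_finset]
  rw [hcard, ← card_nonzeroOffDiag, card_nonzeroOffDiag_eq_two_mul, Nat.cast_mul, Nat.cast_two,
    Int.mul_ediv_cancel_left _ two_ne_zero]
end
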